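/- arXiv:2605.07184 — 6 statements merged into one kernel-verified Lean document; each statement's English description precedes it below -/
import Mathlib

section
/- Let p∈[1,2]. For all x,y∈ℝ^d, ‖x+y‖_p^p ≤ ‖x‖_p^p + 4‖y‖_p^p + p Σ_{j=1}^d y^{(j)} sign(x^{(j)}) |x^{(j)}|^{p−1}, where ‖v‖_p^p = Σ_{j=1}^d |v^{(j)}|^p. -/
open Finset
open scoped NNReal

lemma rpow_subadd {q : ℝ} (hq0 : 0 ≤ q) (hq1 : q ≤ 1) {a b : ℝ} (ha : 0 ≤ a) (hb : 0 ≤ b) :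
    (a + b) ^ q ≤ a ^ q + b ^ q := by
  have key := NNReal.rpow_add_le_add_rpow a.toNNReal b.toNNReal hq0 hq1
  have h2 := NNReal.coe_le_coe.mpr key
  push_cast at h2
  rwa [Real.coe_toNNReal a ha, Real.coe_toNNReal b hb] at h2

lemma rpow_sub_one_mul {x : ℝ} (hx : x ≠ 0) (p : ℝ) : x ^ (p - 1) * x = x ^ p := by
  rw [← Real.rpow_add_one hx (p - 1)]; norm_num

lemma tangent_le {p : ℝ} (hp : 1 ≤ p) {u v : ℝ} (hu : 0 ≤ u) (hv : 0 < v) :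
    v ^ p + p * v ^ (p - 1) * (u - v) ≤ u ^ p := by
  have hs : -1 ≤ (u - v) / v := by
    rw [le_div_iff₀ hv]; linarith
  have hb := one_add_mul_self_le_rpow_one_add hs hp
  have h1 : (1 + (u - v) / v) = u / v := by field_simp; ring
  rw [h1, Real.div_rpow hu hv.le p] at hb
  have hvp : (0:ℝ) < v ^ p := Real.rpow_pos_of_pos hv p
  rw [le_div_iff₀ hvp] at hb
  calc v ^ p + p * v ^ (p - 1) * (u - v)
      = (1 + p * ((u - v) / v)) * v ^ p := by
        rw [← rpow_sub_one_mul hv.ne' p]; field_simp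
    _ ≤ u ^ p := hb

lemma scalar_key_pos {p : ℝ} (hp1 : 1 ≤ p) (hp2 : p ≤ 2) {a : ℝ} (ha : 0 < a) (b : ℝ) :
    |a + b| ^ p ≤ a ^ p + 4 * |b| ^ p + p * b * a ^ (p - 1) := by
  have hq0 : (0:ℝ) ≤ p - 1 := by linarith
  have hq1 : p - 1 ≤ 1 := by linarith
  have hap : 0 ≤ a ^ (p-1) := Real.rpow_nonneg ha.le _
  have hbp : 0 ≤ |b| ^ p := Real.rpow_nonneg (abs_nonneg b) _
  rcases le_or_gt 0 b with hb | hb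
  · have habs : |a + b| = a + b := abs_of_nonneg (by linarith)
    have habs' : |b| = b := abs_of_nonneg hb
    rw [habs, habs']
    have hab : 0 < a + b := by linarith
    have ht := tangent_le hp1 ha.le hab
    have h1 : (a + b) ^ p ≤ a ^ p + p * (a + b) ^ (p - 1) * b := by nlinarith [ht]
    have h2 : (a + b) ^ (p - 1) ≤ a ^ (p - 1) + b ^ (p - 1) := rpow_subadd hq0 hq1 ha.le hb
    have h3 : b ^ (p - 1) * b ≤ b ^ p := by
      rcases eq_or_lt_of_le hb with rfl | hb'
      · simp [Real.zero_rpow (by linarith : p ≠ 0)]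
      · rw [rpow_sub_one_mul hb'.ne' p]
    have hbpn : 0 ≤ b ^ p := Real.rpow_nonneg hb _
    nlinarith [mul_le_mul_of_nonneg_right h2 (mul_nonneg (by linarith : (0:ℝ) ≤ p) hb)]
  · obtain ⟨c, rfl⟩ : ∃ c, b = -c := ⟨-b, by ring⟩
    have hc0 : 0 < c := by linarith
    have habs' : |(-c)| = c := by rw [abs_neg, abs_of_pos hc0]
    rw [habs']
    have hcp : 0 ≤ c ^ p := Real.rpow_nonneg hc0.le _
    have hcq : 0 ≤ c ^ (p-1) := Real.rpow_nonneg hc0.le _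
    rcases lt_trichotomy c a with hca | hca | hca
    · have habs : |a + -c| = a - c := by rw [abs_of_pos (by linarith)]; ring
      rw [habs]
      have hac : 0 < a - c := by linarith
      have ht := tangent_le hp1 ha.le hac
      have h1 : (a - c) ^ p + p * (a - c) ^ (p - 1) * c ≤ a ^ p := by nlinarith [ht]
      have h2 : a ^ (p - 1) ≤ (a - c) ^ (p - 1) + c ^ (p - 1) := by
        have := rpow_subadd hq0 hq1 hac.le hc0.le
        simpa using this
      have h3 : c ^ (p-1) * c ≤ c ^ p := by rw [rpow_sub_one_mul hc0.ne' p]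
      nlinarith [mul_le_mul_of_nonneg_right h2 (mul_nonneg (by linarith : (0:ℝ) ≤ p) hc0.le)]
    · have habs : |a + -c| = 0 := by rw [hca]; simp
      rw [habs]
      have hz : (0:ℝ) ^ p = 0 := Real.zero_rpow (by linarith)
      rw [hz]
      have h3 : a ^ (p-1) * a = a ^ p := rpow_sub_one_mul ha.ne' p
      have hapn : 0 ≤ a ^ p := Real.rpow_nonneg ha.le _
      rw [hca]
      nlinarith
    · have habs : |a + -c| = c - a := by rw [abs_of_neg (by linarith : a + -c < 0)]; ring
      rw [habs]
      have h0 : (c - a) ^ p ≤ c ^ p := Real.rpow_le_rpow (by linarith) (by linarith) (by linarith)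
      have h1 : a ^ (p-1) ≤ c ^ (p-1) := Real.rpow_le_rpow ha.le hca.le hq0
      have h3 : c ^ (p-1) * c ≤ c ^ p := by rw [rpow_sub_one_mul hc0.ne' p]
      have hA := mul_le_mul_of_nonneg_right h1 (mul_nonneg (by linarith : (0:ℝ) ≤ p) hc0.le)
      have hB := mul_le_mul_of_nonneg_left h3 (by linarith : (0:ℝ) ≤ p)
      have hC := mul_nonneg (by linarith : (0:ℝ) ≤ 2 - p) hcp
      have hD : 0 ≤ a ^ p := Real.rpow_nonneg ha.le _
      nlinarith [hA, hB, hC, hD]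

lemma scalar_key {p : ℝ} (hp1 : 1 ≤ p) (hp2 : p ≤ 2) (a b : ℝ) :
    |a + b| ^ p ≤ |a| ^ p + 4 * |b| ^ p + p * (b * Real.sign a * |a| ^ (p - 1)) := by
  rcases lt_trichotomy a 0 with ha | ha | ha
  · have key := scalar_key_pos hp1 hp2 (by linarith : (0:ℝ) < -a) (-b)
    rw [show -a + -b = -(a+b) by ring, abs_neg, abs_neg] at key
    rw [Real.sign_of_neg ha, abs_of_neg ha]
    calc |a + b| ^ p ≤ (-a) ^ p + 4 * |b| ^ p + p * (-b) * (-a) ^ (p-1) := key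
      _ = (-a) ^ p + 4 * |b| ^ p + p * (b * (-1) * (-a) ^ (p - 1)) := by ring
  · subst ha
    simp only [Real.sign_zero, mul_zero, zero_mul, add_zero, zero_add, abs_zero]
    have hz : (0:ℝ) ^ p = 0 := Real.zero_rpow (by linarith)
    rw [hz]
    have hbp : 0 ≤ |b| ^ p := Real.rpow_nonneg (abs_nonneg b) _
    linarith
  · have key := scalar_key_pos hp1 hp2 ha b
    rw [Real.sign_of_pos ha, abs_of_pos ha]
    calc |a + b| ^ p ≤ a ^ p + 4 * |b| ^ p + p * b * a ^ (p-1) := key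
      _ = a ^ p + 4 * |b| ^ p + p * (b * 1 * a ^ (p - 1)) := by ring

/-- **Lemma A.1** (elementary `p`-norm inequality). For `p ∈ [1,2]` and `x, y ∈ ℝ^d`,
`‖x+y‖_p^p ≤ ‖x‖_p^p + 4‖y‖_p^p + p Σ_j y_j sign(x_j) |x_j|^(p-1)`. -/
theorem pnorm_triangle_inequality
    (d : ℕ) (p : ℝ) (hp1 : 1 ≤ p) (hp2 : p ≤ 2) (x y : Fin d → ℝ) :
    ∑ j, |x j + y j| ^ p
      ≤ (∑ j, |x j| ^ p) + 4 * ∑ j, |y j| ^ p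
        + p * ∑ j, y j * Real.sign (x j) * |x j| ^ (p - 1) := by
  have h : ∑ j, |x j + y j| ^ p
      ≤ ∑ j, (|x j| ^ p + 4 * |y j| ^ p + p * (y j * Real.sign (x j) * |x j| ^ (p - 1))) :=
    Finset.sum_le_sum fun j _ => scalar_key hp1 hp2 (x j) (y j)
  simpa [Finset.sum_add_distrib, Finset.mul_sum] using h
end

section
/- Let A be a symmetric positive definite d×d real matrix and {γ_i}_{i≥1} a positive non-increasing sequence, regularly varying with index −ρ for some ρ∈[0,1), such that γ_1σ<1 for every eigenvalue σ of A. Define G_{N,i} = γ_i Σ_{j=i}^N ∏_{k=i+1}^j (I−γ_k A). Then sup_{N≥1} sup_{1≤i≤N} ‖G_{N,i}‖_op < ∞. -/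
open Filter Finset
open scoped Topology RealInnerProductSpace

noncomputable section

/-- The ordered product `f a * f (a+1) * ⋯ * f b` (equal to `1` when `b < a`). -/
def prodIcc {M : Type*} [Monoid M] (f : ℕ → M) (a b : ℕ) : M :=
  ((List.range' a (b + 1 - a)).map f).prod

private lemma list_prod_eq_Ico {M : Type*} [CommMonoid M] (g : ℕ → M) :
    ∀ (n a : ℕ), ((List.range' a n).map g).prod = ∏ k ∈ Finset.Ico a (a + n), g k := by
  intro n
  induction n with
  | zero => intro a; simp
  | succ n ih =>
      intro a
      rw [List.range'_succ, List.map_cons, List.prod_cons, ih (a + 1),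
        Finset.prod_eq_prod_Ico_succ_bot (by omega : a < a + (n + 1)) g]
      have h : a + 1 + n = a + (n + 1) := by omega
      rw [h]

private lemma norm_list_prod_le {d : ℕ}
    (F : ℕ → EuclideanSpace ℝ (Fin d) →L[ℝ] EuclideanSpace ℝ (Fin d)) (g : ℕ → ℝ) :
    ∀ l : List ℕ, (∀ k ∈ l, ‖F k‖ ≤ g k ∧ 0 ≤ g k) →
      ‖(l.map F).prod‖ ≤ (l.map g).prod := by
  intro l
  induction l with
  | nil =>
      intro _
      simp only [List.map_nil, List.prod_nil]
      rw [ContinuousLinearMap.one_def]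
      exact ContinuousLinearMap.norm_id_le
  | cons a l ih =>
      intro h
      simp only [List.map_cons, List.prod_cons]
      have ha := h a List.mem_cons_self
      have hl := ih (fun k hk => h k (List.mem_cons_of_mem a hk))
      calc ‖F a * (l.map F).prod‖ ≤ ‖F a‖ * ‖(l.map F).prod‖ := norm_mul_le _ _
        _ ≤ g a * (l.map g).prod := mul_le_mul ha.1 hl (norm_nonneg _) ha.2

/-- Bound on the operator norm of `prodIcc` in terms of a scalar product. -/
private lemma prodIcc_norm_le {d : ℕ}
    (A : EuclideanSpace ℝ (Fin d) →L[ℝ] EuclideanSpace ℝ (Fin d)) (γ : ℕ → ℝ) (μ : ℝ)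
    (hnorm : ∀ k, 1 ≤ k →
      ‖(1 : EuclideanSpace ℝ (Fin d) →L[ℝ] EuclideanSpace ℝ (Fin d)) - γ k • A‖ ≤ 1 - μ * γ k)
    (hfac : ∀ k, 1 ≤ k → 0 ≤ 1 - μ * γ k) (i j : ℕ) (hij : i ≤ j) :
    ‖prodIcc (fun k => (1 : EuclideanSpace ℝ (Fin d) →L[ℝ] EuclideanSpace ℝ (Fin d))
        - γ k • A) (i + 1) j‖ ≤ ∏ k ∈ Finset.Ioc i j, (1 - μ * γ k) := by
  unfold prodIcc
  have h1 : ‖((List.range' (i + 1) (j + 1 - (i + 1))).map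
      (fun k => (1 : EuclideanSpace ℝ (Fin d) →L[ℝ] EuclideanSpace ℝ (Fin d)) - γ k • A)).prod‖
      ≤ ((List.range' (i + 1) (j + 1 - (i + 1))).map (fun k => 1 - μ * γ k)).prod := by
    apply norm_list_prod_le
    intro k hk
    rw [List.mem_range'_1] at hk
    exact ⟨hnorm k (by omega), hfac k (by omega)⟩
  refine h1.trans (le_of_eq ?_)
  rw [list_prod_eq_Ico]
  have h2 : i + 1 + (j + 1 - (i + 1)) = j + 1 := by omega
  rw [h2]
  apply Finset.prod_congr _ (fun _ _ => rfl)
  exact Finset.ext fun k => by simp only [Finset.mem_Ico, Finset.mem_Ioc]; omega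

/-- Geometric-type bound on a block of the sum where the step size is comparable. -/
private lemma geom_block (γ : ℕ → ℝ) (μ c : ℝ) (hμ : 0 < μ) (hc : 0 < c)
    (hγpos : ∀ i, 1 ≤ i → 0 < γ i)
    (hγmono : ∀ i j, 1 ≤ i → i ≤ j → γ j ≤ γ i)
    (hfac : ∀ k, 1 ≤ k → 0 < 1 - μ * γ k)
    (i m : ℕ) (hi : 1 ≤ i) (hm : m ≤ 2 * i) (hdi : c * γ i ≤ γ (2 * i)) :
    γ i * ∑ j ∈ Finset.Ico i m, ∏ k ∈ Finset.Ioc i j, (1 - μ * γ k) ≤ 1 / (μ * c) := by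
  set x := 1 - μ * γ (2 * i) with hx
  have hγ2i : 0 < γ (2 * i) := hγpos _ (by omega)
  have hx0 : 0 ≤ x := (hfac (2 * i) (by omega)).le
  have hx1 : x < 1 := by have := mul_pos hμ hγ2i; simp only [hx]; linarith
  have hterm : ∀ j ∈ Finset.Ico i m,
      (∏ k ∈ Finset.Ioc i j, (1 - μ * γ k)) ≤ x ^ (j - i) := by
    intro j hj
    simp only [Finset.mem_Ico] at hj
    have h : (∏ k ∈ Finset.Ioc i j, (1 - μ * γ k)) ≤ ∏ _k ∈ Finset.Ioc i j, x := by
      apply Finset.prod_le_prod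
      · intro k hk; simp only [Finset.mem_Ioc] at hk; exact (hfac k (by omega)).le
      · intro k hk
        simp only [Finset.mem_Ioc] at hk
        have hγk : γ (2 * i) ≤ γ k := hγmono k (2 * i) (by omega) (by omega)
        have := mul_le_mul_of_nonneg_left hγk hμ.le
        simp only [hx]; linarith
    simpa [Finset.prod_const, Nat.card_Ioc] using h
  have hsum : ∑ j ∈ Finset.Ico i m, ∏ k ∈ Finset.Ioc i j, (1 - μ * γ k) ≤ (1 - x)⁻¹ := by
    calc ∑ j ∈ Finset.Ico i m, ∏ k ∈ Finset.Ioc i j, (1 - μ * γ k)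
        ≤ ∑ j ∈ Finset.Ico i m, x ^ (j - i) := Finset.sum_le_sum hterm
      _ = ∑ t ∈ Finset.range (m - i), x ^ t := by
          rw [Finset.sum_Ico_eq_sum_range]
          exact Finset.sum_congr rfl (fun t _ => by congr 1; omega)
      _ ≤ ∑' t : ℕ, x ^ t := Summable.sum_le_tsum _ (fun t _ => pow_nonneg hx0 t)
          (summable_geometric_of_lt_one hx0 hx1)
      _ = (1 - x)⁻¹ := tsum_geometric_of_lt_one hx0 hx1
  have h1x : 1 - x = μ * γ (2 * i) := by simp only [hx]; ring
  have hpos2 : 0 < μ * γ (2 * i) := by positivity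
  calc γ i * ∑ j ∈ Finset.Ico i m, ∏ k ∈ Finset.Ioc i j, (1 - μ * γ k)
      ≤ γ i * (1 - x)⁻¹ := mul_le_mul_of_nonneg_left hsum (hγpos i hi).le
    _ = γ i / (μ * γ (2 * i)) := by rw [h1x, div_eq_mul_inv]
    _ ≤ 1 / (μ * c) := by
        rw [div_le_div_iff₀ hpos2 (by positivity)]
        nlinarith [(hγpos i hi).le]

/-- The main scalar estimate, for indices past the threshold `i₁`. -/
private lemma main_block (γ : ℕ → ℝ) (μ c q C₀ : ℝ) (i₁ : ℕ)
    (hμ : 0 < μ) (hc : 0 < c)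
    (hγpos : ∀ i, 1 ≤ i → 0 < γ i)
    (hγmono : ∀ i j, 1 ≤ i → i ≤ j → γ j ≤ γ i)
    (hfac : ∀ k, 1 ≤ k → 0 < 1 - μ * γ k)
    (hi₁ : 1 ≤ i₁)
    (hdouble : ∀ i, i₁ ≤ i → c * γ i ≤ γ (2 * i))
    (hq : ∀ i : ℕ, i₁ ≤ i → (1 / c) * Real.exp (-(μ * c * (i * γ i))) ≤ q)
    (hq0 : 0 ≤ q) (hq1 : q < 1)
    (hC₀ : C₀ = 1 / (μ * c) * (1 - q)⁻¹) :
    ∀ n N i : ℕ, i₁ ≤ i → N - i ≤ n →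
      γ i * ∑ j ∈ Finset.Icc i N, ∏ k ∈ Finset.Ioc i j, (1 - μ * γ k) ≤ C₀ := by
  have h1q : 0 < 1 - q := by linarith
  have hμc : 0 < μ * c := by positivity
  have hC₀pos : 0 < C₀ := by rw [hC₀]; positivity
  have hID : 1 / (μ * c) = C₀ * (1 - q) := by
    rw [hC₀]; field_simp
  have hsmall : ∀ N i : ℕ, i₁ ≤ i → N < 2 * i →
      γ i * ∑ j ∈ Finset.Icc i N, ∏ k ∈ Finset.Ioc i j, (1 - μ * γ k) ≤ C₀ := by
    intro N i hi hN
    have h1i : 1 ≤ i := le_trans hi₁ hi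
    have := geom_block γ μ c hμ hc hγpos hγmono hfac i (N + 1) h1i (by omega) (hdouble i hi)
    rw [Finset.Ico_add_one_right_eq_Icc] at this
    refine this.trans ?_
    nlinarith
  intro n
  induction n with
  | zero =>
      intro N i hi hn
      exact hsmall N i hi (by omega)
  | succ n ih =>
      intro N i hi hn
      by_cases hN : N < 2 * i
      · exact hsmall N i hi hN
      push_neg at hN
      have h1i : 1 ≤ i := le_trans hi₁ hi
      have hsplit : ∑ j ∈ Finset.Icc i N, ∏ k ∈ Finset.Ioc i j, (1 - μ * γ k)
          = (∑ j ∈ Finset.Ico i (2 * i), ∏ k ∈ Finset.Ioc i j, (1 - μ * γ k))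
            + ∑ j ∈ Finset.Icc (2 * i) N, ∏ k ∈ Finset.Ioc i j, (1 - μ * γ k) := by
        rw [← Finset.Ico_add_one_right_eq_Icc i N,
          ← Finset.sum_Ico_consecutive _ (show i ≤ 2 * i by omega) (show 2 * i ≤ N + 1 by omega),
          Finset.Ico_add_one_right_eq_Icc]
      set D := ∏ k ∈ Finset.Ioc i (2 * i), (1 - μ * γ k) with hD
      have hsecond : ∑ j ∈ Finset.Icc (2 * i) N, ∏ k ∈ Finset.Ioc i j, (1 - μ * γ k)
          = D * ∑ j ∈ Finset.Icc (2 * i) N, ∏ k ∈ Finset.Ioc (2 * i) j, (1 - μ * γ k) := by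
        rw [Finset.mul_sum]
        apply Finset.sum_congr rfl
        intro j hj
        simp only [Finset.mem_Icc] at hj
        rw [hD, Finset.prod_Ioc_consecutive _ (show i ≤ 2 * i by omega) hj.1]
      set T₂ := ∑ j ∈ Finset.Icc (2 * i) N, ∏ k ∈ Finset.Ioc (2 * i) j, (1 - μ * γ k) with hT₂d
      have hD0 : 0 ≤ D := by
        rw [hD]
        exact Finset.prod_nonneg fun k hk => by
          simp only [Finset.mem_Ioc] at hk; exact (hfac k (by omega)).le
      have hT₂0 : 0 ≤ T₂ := by
        rw [hT₂d]
        refine Finset.sum_nonneg fun j hj => Finset.prod_nonneg fun k hk => ?_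
        simp only [Finset.mem_Ioc] at hk
        simp only [Finset.mem_Icc] at hj
        exact (hfac k (by omega)).le
      have hγ2i : 0 < γ (2 * i) := hγpos _ (by omega)
      have hdi := hdouble i hi
      have hDle : D ≤ Real.exp (-(μ * c * (i * γ i))) := by
        set x := 1 - μ * γ (2 * i) with hxd
        have hx0 : 0 ≤ x := (hfac (2 * i) (by omega)).le
        have hstep1 : D ≤ x ^ i := by
          have h : D ≤ ∏ _k ∈ Finset.Ioc i (2 * i), x := by
            rw [hD]
            apply Finset.prod_le_prod
            · intro k hk; simp only [Finset.mem_Ioc] at hk; exact (hfac k (by omega)).le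
            · intro k hk
              simp only [Finset.mem_Ioc] at hk
              have hγk : γ (2 * i) ≤ γ k := hγmono k (2 * i) (by omega) hk.2
              have := mul_le_mul_of_nonneg_left hγk hμ.le
              simp only [hxd]; linarith
          simpa [Finset.prod_const, Nat.card_Ioc, show 2 * i - i = i by omega] using h
        have hstep2 : x ≤ Real.exp (-(μ * γ (2 * i))) := by
          have := Real.add_one_le_exp (-(μ * γ (2 * i)))
          simp only [hxd]; linarith
        have hstep3 : x ^ i ≤ Real.exp (-(μ * γ (2 * i))) ^ i := pow_le_pow_left₀ hx0 hstep2 i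
        have hstep4 : Real.exp (-(μ * γ (2 * i))) ^ i = Real.exp ((i : ℝ) * -(μ * γ (2 * i))) :=
          (Real.exp_nat_mul _ i).symm
        have hstep5 : Real.exp ((i : ℝ) * -(μ * γ (2 * i))) ≤ Real.exp (-(μ * c * (i * γ i))) := by
          apply Real.exp_le_exp.mpr
          have hi0 : (0 : ℝ) ≤ (i : ℝ) := Nat.cast_nonneg i
          have hmul := mul_le_mul_of_nonneg_left hdi (mul_nonneg hi0 hμ.le)
          nlinarith [hmul]
        calc D ≤ x ^ i := hstep1
          _ ≤ Real.exp (-(μ * γ (2 * i))) ^ i := hstep3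
          _ = Real.exp ((i : ℝ) * -(μ * γ (2 * i))) := hstep4
          _ ≤ Real.exp (-(μ * c * (i * γ i))) := hstep5
      have hT₂C : γ (2 * i) * T₂ ≤ C₀ := ih N (2 * i) (by omega) (by omega)
      have hfirst : γ i * ∑ j ∈ Finset.Ico i (2 * i), ∏ k ∈ Finset.Ioc i j, (1 - μ * γ k)
          ≤ 1 / (μ * c) :=
        geom_block γ μ c hμ hc hγpos hγmono hfac i (2 * i) h1i le_rfl hdi
      have hγile : γ i ≤ (1 / c) * γ (2 * i) := by
        rw [one_div, inv_mul_eq_div, le_div_iff₀ hc, mul_comm]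
        exact hdi
      have hsecond_le : γ i * (D * T₂) ≤ q * C₀ := by
        have e1 : γ i * (D * T₂) ≤ ((1 / c) * γ (2 * i)) * (D * T₂) :=
          mul_le_mul_of_nonneg_right hγile (mul_nonneg hD0 hT₂0)
        have e2 : ((1 / c) * γ (2 * i)) * (D * T₂) = ((1 / c) * D) * (γ (2 * i) * T₂) := by ring
        have hcD0 : 0 ≤ (1 / c) * D := mul_nonneg (by positivity) hD0
        have e3 : ((1 / c) * D) * (γ (2 * i) * T₂) ≤ ((1 / c) * D) * C₀ :=
          mul_le_mul_of_nonneg_left hT₂C hcD0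
        have e4 : (1 / c) * D ≤ q := by
          have := mul_le_mul_of_nonneg_left hDle (le_of_lt (by positivity : (0:ℝ) < 1 / c))
          exact this.trans (hq i hi)
        have e5 : ((1 / c) * D) * C₀ ≤ q * C₀ := mul_le_mul_of_nonneg_right e4 hC₀pos.le
        linarith
      have hγi0 : 0 < γ i := hγpos i h1i
      calc γ i * ∑ j ∈ Finset.Icc i N, ∏ k ∈ Finset.Ioc i j, (1 - μ * γ k)
          = γ i * ∑ j ∈ Finset.Ico i (2 * i), ∏ k ∈ Finset.Ioc i j, (1 - μ * γ k)
            + γ i * (D * T₂) := by rw [hsplit, hsecond]; ring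
        _ ≤ 1 / (μ * c) + q * C₀ := add_le_add hfirst hsecond_le
        _ = C₀ := by rw [hID]; ring

/-- Growth of `i * γ i` towards infinity from the doubling property. -/
private lemma growth_aux (γ : ℕ → ℝ) (c : ℝ) (i₂ : ℕ)
    (hγpos : ∀ i, 1 ≤ i → 0 < γ i)
    (hγmono : ∀ i j, 1 ≤ i → i ≤ j → γ j ≤ γ i)
    (hc : 1 / 2 < c)
    (hi₂1 : 1 ≤ i₂)
    (hi₂c : 2 * c / (2 * c - 1) ≤ (i₂ : ℝ))
    (hdouble : ∀ i, i₂ ≤ i → c * γ i ≤ γ (2 * i)) :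
    ∀ β : ℝ, ∃ i₁ : ℕ, i₂ ≤ i₁ ∧ 1 ≤ i₁ ∧ ∀ i, i₁ ≤ i → β ≤ (i : ℝ) * γ i := by
  have hc0 : 0 < c := by linarith
  have h2c1 : 0 < 2 * c - 1 := by linarith
  set r : ℝ := (2 * c + 1) / 2 with hrd
  have hr1 : 1 < r := by rw [hrd]; linarith
  set b₀ : ℝ := (i₂ : ℝ) * γ (2 * i₂) with hb₀d
  have hγ2i₂ : 0 < γ (2 * i₂) := hγpos _ (by omega)
  have hb₀pos : 0 < b₀ := by
    rw [hb₀d]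
    have : (0:ℝ) < (i₂ : ℝ) := by exact_mod_cast hi₂1
    positivity
  have key : ∀ i, i₂ ≤ i → b₀ * r ^ (Nat.log 2 (i / i₂)) ≤ (i : ℝ) * γ i := by
    intro i
    induction i using Nat.strong_induction_on with
    | _ i IH =>
      intro hi
      by_cases hcase : i < 2 * i₂
      · have hdiv : i / i₂ = 1 := Nat.div_eq_of_lt_le (by omega) (by omega)
        rw [hdiv]
        simp only [Nat.log_one_right, pow_zero, mul_one]
        have hγi : γ (2 * i₂) ≤ γ i := hγmono i (2 * i₂) (by omega) (by omega)
        have hii : (i₂ : ℝ) ≤ (i : ℝ) := by exact_mod_cast hi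
        rw [hb₀d]
        have : (0:ℝ) < (i₂ : ℝ) := by exact_mod_cast hi₂1
        nlinarith
      · push_neg at hcase
        set h := (i + 1) / 2 with hhd
        have hf1 : i₂ ≤ h := by omega
        have hf2 : h < i := by omega
        have hf3 : i ≤ 2 * h := by omega
        have hf4 : 2 * h ≤ i + 1 := by omega
        have hf5 : 1 ≤ h := by omega
        have hIH := IH h hf2 hf1
        -- γ i ≥ γ (2 h) ≥ c γ h
        have hγi : γ (2 * h) ≤ γ i := hγmono i (2 * h) (by omega) hf3
        have hcγ : c * γ h ≤ γ (2 * h) := hdouble h hf1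
        have hγh : 0 < γ h := hγpos h (by omega)
        -- (i : ℝ) ≥ 2 h - 1
        have hicast : (2 * (h : ℝ) - 1) ≤ (i : ℝ) := by
          have : (2 * h : ℕ) ≤ i + 1 := hf4
          push_cast
          have : ((2 * h : ℕ) : ℝ) ≤ (i : ℝ) + 1 := by exact_mod_cast this
          push_cast at this
          linarith
        have hh2 : 2 * c / (2 * c - 1) ≤ (h : ℝ) := by
          have : (i₂ : ℝ) ≤ (h : ℝ) := by exact_mod_cast hf1
          linarith
        -- (2h - 1) * c ≥ r * h
        have hstep : r * (h : ℝ) ≤ (2 * (h : ℝ) - 1) * c := by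
          rw [hrd]
          have h0 : 0 < (h : ℝ) := by exact_mod_cast hf5
          rw [div_le_iff₀ h2c1] at hh2
          nlinarith
        -- chain
        have hchain : r * ((h : ℝ) * γ h) ≤ (i : ℝ) * γ i := by
          have hi0 : (0:ℝ) ≤ (i : ℝ) := Nat.cast_nonneg i
          have c1 : (i : ℝ) * γ (2 * h) ≤ (i : ℝ) * γ i := mul_le_mul_of_nonneg_left hγi hi0
          have c2 : (i : ℝ) * (c * γ h) ≤ (i : ℝ) * γ (2 * h) := mul_le_mul_of_nonneg_left hcγ hi0
          have c3 : (2 * (h : ℝ) - 1) * (c * γ h) ≤ (i : ℝ) * (c * γ h) := by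
            apply mul_le_mul_of_nonneg_right hicast
            positivity
          have c4 : r * ((h : ℝ) * γ h) ≤ (2 * (h : ℝ) - 1) * (c * γ h) := by
            have := mul_le_mul_of_nonneg_right hstep hγh.le
            calc r * ((h : ℝ) * γ h) = r * (h : ℝ) * γ h := by ring
              _ ≤ (2 * (h : ℝ) - 1) * c * γ h := this
              _ = (2 * (h : ℝ) - 1) * (c * γ h) := by ring
          linarith
        -- exponent bound : log2 (i / i₂) ≤ log2 (h / i₂) + 1
        have hk1 : 1 ≤ h / i₂ := (Nat.one_le_div_iff (by omega)).mpr hf1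
        have hexp : Nat.log 2 (i / i₂) ≤ Nat.log 2 (h / i₂) + 1 := by
          have hd1 : i / i₂ ≤ 2 * (h / i₂) + 1 := by
            have e1 : i / i₂ ≤ (2 * h) / i₂ := Nat.div_le_div_right hf3
            have e3 : h < (h / i₂ + 1) * i₂ :=
              (Nat.div_lt_iff_lt_mul (by omega : 0 < i₂)).mp (Nat.lt_succ_self _)
            have e4 : 2 * ((h / i₂ + 1) * i₂) = (2 * (h / i₂) + 2) * i₂ := by ring
            have e2 : (2 * h) / i₂ < 2 * (h / i₂) + 2 := by
              rw [Nat.div_lt_iff_lt_mul (by omega : 0 < i₂)]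
              omega
            omega
          have hd2 : Nat.log 2 (2 * (h / i₂) + 1) < Nat.log 2 (h / i₂) + 2 := by
            rw [Nat.log_lt_iff_lt_pow one_lt_two (by omega)]
            have e4 : h / i₂ < 2 ^ ((Nat.log 2 (h / i₂)) + 1) :=
              Nat.lt_pow_succ_log_self one_lt_two _
            have e5 : 2 ^ (Nat.log 2 (h / i₂) + 2) = 2 * 2 ^ (Nat.log 2 (h / i₂) + 1) := by ring
            omega
          have := Nat.log_mono_right (b := 2) hd1
          omega
        have hpow : r ^ (Nat.log 2 (i / i₂)) ≤ r ^ (Nat.log 2 (h / i₂) + 1) :=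
          pow_le_pow_right₀ hr1.le hexp
        calc b₀ * r ^ (Nat.log 2 (i / i₂)) ≤ b₀ * r ^ (Nat.log 2 (h / i₂) + 1) :=
              mul_le_mul_of_nonneg_left hpow hb₀pos.le
          _ = r * (b₀ * r ^ (Nat.log 2 (h / i₂))) := by ring
          _ ≤ r * ((h : ℝ) * γ h) := mul_le_mul_of_nonneg_left hIH (by linarith)
          _ ≤ (i : ℝ) * γ i := hchain
  intro β
  obtain ⟨K, hK⟩ := pow_unbounded_of_one_lt (β / b₀) hr1
  have h2K : 0 < 2 ^ K := pow_pos (by omega) K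
  refine ⟨2 ^ K * i₂, Nat.le_mul_of_pos_left i₂ h2K, Nat.mul_pos h2K (by omega), ?_⟩
  intro i hi
  have hii₂ : i₂ ≤ i := le_trans (Nat.le_mul_of_pos_left i₂ h2K) hi
  have hlog : K ≤ Nat.log 2 (i / i₂) := by
    rw [Nat.le_log_iff_pow_le one_lt_two]
    · exact (Nat.le_div_iff_mul_le (by omega)).mpr hi
    · have : 1 ≤ i / i₂ := (Nat.one_le_div_iff (by omega)).mpr hii₂
      omega
  have h1 : β ≤ b₀ * r ^ K := by
    rw [div_lt_iff₀ hb₀pos] at hK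
    linarith
  have h2 : b₀ * r ^ K ≤ b₀ * r ^ (Nat.log 2 (i / i₂)) :=
    mul_le_mul_of_nonneg_left (pow_le_pow_right₀ hr1.le hlog) hb₀pos.le
  exact h1.trans (h2.trans (key i hii₂))

/-- Bound for small indices `i < i₁`, given the uniform bound starting at `i₁`. -/
private lemma small_i (γ : ℕ → ℝ) (μ C₀ : ℝ) (i₁ : ℕ) (hμ : 0 < μ) (hi₁ : 1 ≤ i₁)
    (hγpos : ∀ i, 1 ≤ i → 0 < γ i)
    (hγmono : ∀ i j, 1 ≤ i → i ≤ j → γ j ≤ γ i)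
    (hfac : ∀ k, 1 ≤ k → 0 < 1 - μ * γ k)
    (hC₀0 : 0 ≤ C₀)
    (hbig : ∀ N, γ i₁ * ∑ j ∈ Finset.Icc i₁ N, ∏ k ∈ Finset.Ioc i₁ j, (1 - μ * γ k) ≤ C₀)
    (i N : ℕ) (hi : 1 ≤ i) (hii : i < i₁) :
    γ i * ∑ j ∈ Finset.Icc i N, ∏ k ∈ Finset.Ioc i j, (1 - μ * γ k)
      ≤ γ 1 * ((i₁ : ℝ) + C₀ / γ i₁) := by
  have hγi := hγpos i hi
  have hγ1 := hγpos 1 le_rfl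
  have hγi₁ := hγpos i₁ hi₁
  have hγile : γ i ≤ γ 1 := hγmono 1 i le_rfl hi
  have hP0 : ∀ a j : ℕ, 0 ≤ ∏ k ∈ Finset.Ioc a j, (1 - μ * γ k) := by
    intro a j
    exact Finset.prod_nonneg fun k hk => by
      simp only [Finset.mem_Ioc] at hk; exact (hfac k (by omega)).le
  have hP1 : ∀ a j : ℕ, (∏ k ∈ Finset.Ioc a j, (1 - μ * γ k)) ≤ 1 := by
    intro a j
    apply Finset.prod_le_one
    · intro k hk; simp only [Finset.mem_Ioc] at hk; exact (hfac k (by omega)).le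
    · intro k hk
      simp only [Finset.mem_Ioc] at hk
      have h1k : (1:ℕ) ≤ k := by omega
      have := mul_pos hμ (hγpos k h1k)
      linarith
  rw [← Finset.sum_filter_add_sum_filter_not (Finset.Icc i N) (fun j => j < i₁)]
  set S₁ := ∑ j ∈ (Finset.Icc i N).filter (fun j => j < i₁),
      ∏ k ∈ Finset.Ioc i j, (1 - μ * γ k) with hS₁d
  set S₂ := ∑ j ∈ (Finset.Icc i N).filter (fun j => ¬ j < i₁),
      ∏ k ∈ Finset.Ioc i j, (1 - μ * γ k) with hS₂d
  have hS₁0 : 0 ≤ S₁ := Finset.sum_nonneg fun j _ => hP0 i j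
  have hS₂0 : 0 ≤ S₂ := Finset.sum_nonneg fun j _ => hP0 i j
  have hS₁ : S₁ ≤ (i₁ : ℝ) := by
    calc S₁ ≤ ∑ _j ∈ (Finset.Icc i N).filter (fun j => j < i₁), (1:ℝ) :=
          Finset.sum_le_sum fun j _ => hP1 i j
      _ = ((Finset.Icc i N).filter (fun j => j < i₁)).card := by simp
      _ ≤ (i₁ : ℝ) := by
          have hsub : (Finset.Icc i N).filter (fun j => j < i₁) ⊆ Finset.range i₁ := by
            intro j hj
            simp only [Finset.mem_filter, Finset.mem_Icc, Finset.mem_range] at hj ⊢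
            exact hj.2
          have hcard := Finset.card_le_card hsub
          simp only [Finset.card_range] at hcard
          exact_mod_cast hcard
  have hS₂ : S₂ ≤ C₀ / γ i₁ := by
    have hstep : ∀ j ∈ (Finset.Icc i N).filter (fun j => ¬ j < i₁),
        (∏ k ∈ Finset.Ioc i j, (1 - μ * γ k)) ≤ ∏ k ∈ Finset.Ioc i₁ j, (1 - μ * γ k) := by
      intro j hj
      simp only [Finset.mem_filter, Finset.mem_Icc, not_lt] at hj
      rw [← Finset.prod_Ioc_consecutive _ (le_of_lt hii) hj.2]
      exact mul_le_of_le_one_left (hP0 i₁ j) (hP1 i i₁)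
    calc S₂ ≤ ∑ j ∈ (Finset.Icc i N).filter (fun j => ¬ j < i₁),
          ∏ k ∈ Finset.Ioc i₁ j, (1 - μ * γ k) := Finset.sum_le_sum hstep
      _ ≤ ∑ j ∈ Finset.Icc i₁ N, ∏ k ∈ Finset.Ioc i₁ j, (1 - μ * γ k) := by
          apply Finset.sum_le_sum_of_subset_of_nonneg
          · intro j hj
            simp only [Finset.mem_filter, Finset.mem_Icc, not_lt] at hj ⊢
            exact ⟨hj.2, hj.1.2⟩
          · intro j _ _; exact hP0 i₁ j
      _ ≤ C₀ / γ i₁ := by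
          rw [le_div_iff₀ hγi₁, mul_comm]
          exact hbig N
  have hsum : S₁ + S₂ ≤ (i₁ : ℝ) + C₀ / γ i₁ := add_le_add hS₁ hS₂
  exact mul_le_mul hγile hsum (by linarith) hγ1.le


private lemma opnorm_aux {d : ℕ} (hd : 0 < d)
    (A : EuclideanSpace ℝ (Fin d) →L[ℝ] EuclideanSpace ℝ (Fin d))
    (hAsym : IsSelfAdjoint A)
    (hApos : ∀ x : EuclideanSpace ℝ (Fin d), x ≠ 0 → 0 < ⟪A x, x⟫)
    (g : ℝ)
    (hsmall : ∀ σ : ℝ, ∀ x : EuclideanSpace ℝ (Fin d), x ≠ 0 → A x = σ • x → g * σ < 1) :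
    ∃ μ : ℝ, 0 < μ ∧ (∃ x : EuclideanSpace ℝ (Fin d), x ≠ 0 ∧ A x = μ • x) ∧
      ∀ t : ℝ, 0 ≤ t → t ≤ g →
        ‖(1 : EuclideanSpace ℝ (Fin d) →L[ℝ] EuclideanSpace ℝ (Fin d)) - t • A‖ ≤ 1 - t * μ := by
  have hT : (↑A : EuclideanSpace ℝ (Fin d) →ₗ[ℝ] EuclideanSpace ℝ (Fin d)).IsSymmetric :=
    hAsym.isSymmetric
  have hn : Module.finrank ℝ (EuclideanSpace ℝ (Fin d)) = d := finrank_euclideanSpace_fin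
  set b := hT.eigenvectorBasis hn with hbd
  set σ := hT.eigenvalues hn with hσd
  have heigv : ∀ j, A (b j) = σ j • b j := by
    intro j
    have h := (hT.hasEigenvector_eigenvectorBasis hn j).apply_eq_smul
    exact h
  have hbne : ∀ j, b j ≠ 0 := fun j => (hT.hasEigenvector_eigenvectorBasis hn j).2
  have hb1 : ∀ j, ⟪b j, b j⟫ = 1 := by
    intro j
    rw [real_inner_self_eq_norm_sq, b.orthonormal.1 j]
    norm_num
  have hσpos : ∀ j, 0 < σ j := by
    intro j
    have h := hApos (b j) (hbne j)
    rw [heigv j, real_inner_smul_left, hb1 j] at h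
    linarith
  have hgσ : ∀ j, g * σ j < 1 := fun j => hsmall (σ j) (b j) (hbne j) (heigv j)
  have hne : (Finset.univ : Finset (Fin d)).Nonempty := ⟨⟨0, hd⟩, Finset.mem_univ _⟩
  obtain ⟨j₀, _, hj₀⟩ := Finset.exists_mem_eq_inf' hne σ
  set μ := Finset.univ.inf' hne σ with hμd
  have hμpos : 0 < μ := hj₀ ▸ hσpos j₀
  refine ⟨μ, hμpos, ⟨b j₀, hbne j₀, by rw [heigv j₀, hj₀]⟩, ?_⟩
  intro t ht0 htg
  have hμle : ∀ j, μ ≤ σ j := fun j => Finset.inf'_le σ (Finset.mem_univ j)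
  have htσ : ∀ j, t * σ j < 1 := by
    intro j
    have := mul_le_mul_of_nonneg_right htg (hσpos j).le
    linarith [hgσ j]
  have htμ1 : t * μ < 1 := by rw [hj₀]; exact htσ j₀
  have hμt1 : 0 ≤ 1 - t * μ := by linarith
  apply ContinuousLinearMap.opNorm_le_bound _ hμt1
  intro x
  have norm_sq : ∀ y : EuclideanSpace ℝ (Fin d), ‖y‖ ^ 2 = ∑ i, (b.repr y i) ^ 2 := by
    intro y
    rw [← b.repr.norm_map y, EuclideanSpace.norm_eq,
      Real.sq_sqrt (Finset.sum_nonneg fun i _ => by positivity)]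
    exact Finset.sum_congr rfl fun i _ => by rw [Real.norm_eq_abs, sq_abs]
  have coordA : ∀ i, b.repr (A x) i = σ i * b.repr x i := by
    intro i
    rw [b.repr_apply_apply, b.repr_apply_apply]
    have hsymm := hT (b i) x
    simp only [ContinuousLinearMap.coe_coe] at hsymm
    rw [← hsymm, heigv i, real_inner_smul_left]
  have coord : ∀ i, b.repr (((1 : EuclideanSpace ℝ (Fin d) →L[ℝ] EuclideanSpace ℝ (Fin d))
      - t • A) x) i = (1 - t * σ i) * b.repr x i := by
    intro i
    have h1 : ((1 : EuclideanSpace ℝ (Fin d) →L[ℝ] EuclideanSpace ℝ (Fin d)) - t • A) x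
        = x - t • A x := by
      simp [ContinuousLinearMap.sub_apply, ContinuousLinearMap.smul_apply]
    rw [h1, map_sub, map_smul]
    have h2 : (b.repr x - t • b.repr (A x)) i = b.repr x i - t * b.repr (A x) i := rfl
    rw [h2, coordA i]
    ring
  have key : ‖((1 : EuclideanSpace ℝ (Fin d) →L[ℝ] EuclideanSpace ℝ (Fin d)) - t • A) x‖ ^ 2
      ≤ (1 - t * μ) ^ 2 * ‖x‖ ^ 2 := by
    rw [norm_sq, norm_sq x, Finset.mul_sum]
    apply Finset.sum_le_sum
    intro i _
    rw [coord i, mul_pow]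
    have h1 : (1 - t * σ i) ^ 2 ≤ (1 - t * μ) ^ 2 := by
      apply sq_le_sq'
      · have := htσ i
        linarith
      · have h := mul_le_mul_of_nonneg_left (hμle i) ht0
        linarith
    have h2 := sq_nonneg (b.repr x i)
    nlinarith
  calc ‖((1 : EuclideanSpace ℝ (Fin d) →L[ℝ] EuclideanSpace ℝ (Fin d)) - t • A) x‖
      = Real.sqrt (‖((1 : EuclideanSpace ℝ (Fin d) →L[ℝ] EuclideanSpace ℝ (Fin d)) - t • A) x‖ ^ 2) :=
        (Real.sqrt_sq (norm_nonneg _)).symm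
    _ ≤ Real.sqrt ((1 - t * μ) ^ 2 * ‖x‖ ^ 2) := Real.sqrt_le_sqrt key
    _ = (1 - t * μ) * ‖x‖ := by
        rw [Real.sqrt_mul (sq_nonneg _), Real.sqrt_sq hμt1, Real.sqrt_sq (norm_nonneg _)]


/-- **Lemma A.7, uniform boundedness**: for a symmetric positive definite `A` and a positive
non-increasing regularly varying learning-rate sequence `{γ_i}` with `γ₁σ < 1` for every
eigenvalue `σ` of `A`, the matrices `G_{N,i} = γ_i Σ_{j=i}^N ∏_{k=i+1}^j (I − γ_k A)` are
uniformly bounded in operator norm. -/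
theorem GNi_uniformly_bounded
    {d : ℕ} (A : EuclideanSpace ℝ (Fin d) →L[ℝ] EuclideanSpace ℝ (Fin d))
    (hAsym : IsSelfAdjoint A)
    (hApos : ∀ x : EuclideanSpace ℝ (Fin d), x ≠ 0 → 0 < ⟪A x, x⟫)
    (γ : ℕ → ℝ) (hγpos : ∀ i, 1 ≤ i → 0 < γ i)
    (hγmono : ∀ i j, 1 ≤ i → i ≤ j → γ j ≤ γ i)
    (ρ : ℝ) (hρ0 : 0 ≤ ρ) (hρ1 : ρ < 1)
    (hγRV : ∀ lam : ℝ, 0 < lam →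
      Tendsto (fun i : ℕ => γ ⌊lam * (i : ℝ)⌋₊ / γ i) atTop (𝓝 (lam ^ (-ρ))))
    (heig : ∀ σ : ℝ, ∀ x : EuclideanSpace ℝ (Fin d), x ≠ 0 → A x = σ • x → γ 1 * σ < 1) :
    ∃ C : ℝ, ∀ N : ℕ, 1 ≤ N → ∀ i ∈ Finset.Icc 1 N,
      ‖γ i • ∑ j ∈ Finset.Icc i N,
          prodIcc (fun k => (1 : EuclideanSpace ℝ (Fin d) →L[ℝ] EuclideanSpace ℝ (Fin d))
            - γ k • A) (i + 1) j‖ ≤ C := by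
  rcases Nat.eq_zero_or_pos d with hd | hd
  · subst hd
    haveI hsub : Subsingleton (EuclideanSpace ℝ (Fin 0)) :=
      ⟨fun a b => PiLp.ext fun i => i.elim0⟩
    refine ⟨0, fun N _ i _ => ?_⟩
    have hz : (γ i • ∑ j ∈ Finset.Icc i N,
        prodIcc (fun k => (1 : EuclideanSpace ℝ (Fin 0) →L[ℝ] EuclideanSpace ℝ (Fin 0))
          - γ k • A) (i + 1) j) = 0 := Subsingleton.elim _ _
    rw [hz, norm_zero]
  · have hγ1 : 0 < γ 1 := hγpos 1 le_rfl
    obtain ⟨μ, hμpos, ⟨xμ, hxμ0, hxμ⟩, hnormt⟩ := opnorm_aux hd A hAsym hApos (γ 1) heig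
    have hμγ1 : γ 1 * μ < 1 := heig μ xμ hxμ0 hxμ
    have hfac : ∀ k, 1 ≤ k → 0 < 1 - μ * γ k := by
      intro k hk
      have h1 : γ k ≤ γ 1 := hγmono 1 k le_rfl hk
      have h2 : μ * γ k ≤ μ * γ 1 := mul_le_mul_of_nonneg_left h1 hμpos.le
      nlinarith
    have hnorm : ∀ k, 1 ≤ k →
        ‖(1 : EuclideanSpace ℝ (Fin d) →L[ℝ] EuclideanSpace ℝ (Fin d)) - γ k • A‖
          ≤ 1 - μ * γ k := by
      intro k hk
      have h := hnormt (γ k) (hγpos k hk).le (hγmono 1 k le_rfl hk)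
      linarith [h]
    -- regular variation constants
    have h2ρ : 1 / 2 < (2:ℝ) ^ (-ρ) := by
      have h := Real.rpow_lt_rpow_of_exponent_lt (show (1:ℝ) < 2 by norm_num)
        (show -(1:ℝ) < -ρ by linarith)
      rw [Real.rpow_neg_one] at h
      rw [one_div]
      exact h
    set c : ℝ := (1 / 2 + (2:ℝ) ^ (-ρ)) / 2 with hcd
    have hc_half : 1 / 2 < c := by rw [hcd]; linarith
    have hc_lt : c < (2:ℝ) ^ (-ρ) := by rw [hcd]; linarith
    have hc0 : 0 < c := by linarith
    have hev := (hγRV 2 two_pos).eventually (eventually_gt_nhds hc_lt)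
    rw [eventually_atTop] at hev
    obtain ⟨i₀', hi₀'⟩ := hev
    set i₀ : ℕ := max i₀' 1 with hi₀d
    have hi₀1 : 1 ≤ i₀ := le_max_right _ _
    have hdouble₀ : ∀ i, i₀ ≤ i → c * γ i ≤ γ (2 * i) := by
      intro i hi
      have h1 : 1 ≤ i := le_trans (le_max_right _ _) hi
      have h2 := hi₀' i (le_trans (le_max_left _ _) hi)
      have hfl : ⌊(2:ℝ) * (i:ℝ)⌋₊ = 2 * i := by
        rw [show (2:ℝ) * (i:ℝ) = ((2*i : ℕ) : ℝ) by push_cast; ring, Nat.floor_natCast]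
      rw [hfl, lt_div_iff₀ (hγpos i h1)] at h2
      linarith
    set i₂ : ℕ := max i₀ (⌈2 * c / (2 * c - 1)⌉₊ + 1) with hi₂d
    have hi₂0 : i₀ ≤ i₂ := le_max_left _ _
    have hi₂1 : 1 ≤ i₂ := hi₀1.trans hi₂0
    have h2c1 : 0 < 2 * c - 1 := by linarith
    have hi₂c : 2 * c / (2 * c - 1) ≤ (i₂ : ℝ) := by
      have h1 : 2 * c / (2 * c - 1) ≤ (⌈2 * c / (2 * c - 1)⌉₊ : ℝ) := Nat.le_ceil _
      have h2 : ⌈2 * c / (2 * c - 1)⌉₊ + 1 ≤ i₂ := le_max_right _ _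
      have h3 : ((⌈2 * c / (2 * c - 1)⌉₊ + 1 : ℕ) : ℝ) ≤ (i₂ : ℝ) := by exact_mod_cast h2
      push_cast at h3
      linarith
    have hdouble₂ : ∀ i, i₂ ≤ i → c * γ i ≤ γ (2 * i) := fun i hi =>
      hdouble₀ i (le_trans hi₂0 hi)
    set β : ℝ := Real.log (1 / c) / (μ * c) + 1 with hβd
    obtain ⟨i₁, hi₁₂, hi₁1, hβi⟩ :=
      growth_aux γ c i₂ hγpos hγmono hc_half hi₂1 hi₂c hdouble₂ β
    set q : ℝ := Real.exp (-(μ * c)) with hqd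
    have hμc : 0 < μ * c := by positivity
    have hq1 : q < 1 := by
      rw [hqd, show (1:ℝ) = Real.exp 0 by rw [Real.exp_zero]]
      exact Real.exp_lt_exp.mpr (by linarith)
    have hq0 : 0 ≤ q := (Real.exp_pos _).le
    have hqbound : ∀ i : ℕ, i₁ ≤ i → (1 / c) * Real.exp (-(μ * c * ((i:ℝ) * γ i))) ≤ q := by
      intro i hi
      have hβle := hβi i hi
      have h1 : μ * c * β ≤ μ * c * ((i:ℝ) * γ i) := mul_le_mul_of_nonneg_left hβle hμc.le
      have h2 : Real.exp (-(μ * c * ((i:ℝ) * γ i))) ≤ Real.exp (-(μ * c * β)) :=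
        Real.exp_le_exp.mpr (by linarith)
      have h3 : μ * c * β = Real.log (1 / c) + μ * c := by
        rw [hβd]; field_simp
      have h4 : Real.exp (-(μ * c * β)) = c * q := by
        rw [h3, neg_add, Real.exp_add, hqd, Real.exp_neg,
          Real.exp_log (by positivity : (0:ℝ) < 1 / c), one_div, inv_inv]
      calc (1 / c) * Real.exp (-(μ * c * ((i:ℝ) * γ i))) ≤ (1 / c) * (c * q) := by
            apply mul_le_mul_of_nonneg_left _ (by positivity)
            rw [← h4]; exact h2
        _ = q := by field_simp
    set C₀ : ℝ := 1 / (μ * c) * (1 - q)⁻¹ with hC₀d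
    have hdouble₁ : ∀ i, i₁ ≤ i → c * γ i ≤ γ (2 * i) := fun i hi =>
      hdouble₂ i (hi₁₂.trans hi)
    have hbig := main_block γ μ c q C₀ i₁ hμpos hc0 hγpos hγmono hfac hi₁1 hdouble₁
      hqbound hq0 hq1 hC₀d
    have hC₀0 : 0 ≤ C₀ := by
      have h1q : 0 < 1 - q := by linarith
      rw [hC₀d]; positivity
    refine ⟨max C₀ (γ 1 * ((i₁ : ℝ) + C₀ / γ i₁)), ?_⟩
    intro N hN i hiIcc
    rw [Finset.mem_Icc] at hiIcc
    obtain ⟨hi1, hiN⟩ := hiIcc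
    have hscal : γ i * ∑ j ∈ Finset.Icc i N, ∏ k ∈ Finset.Ioc i j, (1 - μ * γ k)
        ≤ max C₀ (γ 1 * ((i₁ : ℝ) + C₀ / γ i₁)) := by
      by_cases hcase : i₁ ≤ i
      · exact le_trans (hbig N N i hcase (by omega)) (le_max_left _ _)
      · push_neg at hcase
        exact le_trans (small_i γ μ C₀ i₁ hμpos hi₁1 hγpos hγmono hfac hC₀0
          (fun N' => hbig N' N' i₁ le_rfl (by omega)) i N hi1 hcase) (le_max_right _ _)
    have hγi0 : 0 < γ i := hγpos i hi1
    calc ‖γ i • ∑ j ∈ Finset.Icc i N,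
            prodIcc (fun k => (1 : EuclideanSpace ℝ (Fin d) →L[ℝ] EuclideanSpace ℝ (Fin d))
              - γ k • A) (i + 1) j‖
        = γ i * ‖∑ j ∈ Finset.Icc i N,
            prodIcc (fun k => (1 : EuclideanSpace ℝ (Fin d) →L[ℝ] EuclideanSpace ℝ (Fin d))
              - γ k • A) (i + 1) j‖ := by
          have hns := norm_smul (α := ℝ) (x := ∑ j ∈ Finset.Icc i N,
            prodIcc (fun k => (1 : EuclideanSpace ℝ (Fin d) →L[ℝ] EuclideanSpace ℝ (Fin d))
              - γ k • A) (i + 1) j) (γ i)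
          rw [Real.norm_eq_abs, abs_of_pos hγi0] at hns
          exact hns
      _ ≤ γ i * ∑ j ∈ Finset.Icc i N,
            ‖prodIcc (fun k => (1 : EuclideanSpace ℝ (Fin d) →L[ℝ] EuclideanSpace ℝ (Fin d))
              - γ k • A) (i + 1) j‖ :=
          mul_le_mul_of_nonneg_left (norm_sum_le _ _) hγi0.le
      _ ≤ γ i * ∑ j ∈ Finset.Icc i N, ∏ k ∈ Finset.Ioc i j, (1 - μ * γ k) := by
          apply mul_le_mul_of_nonneg_left _ hγi0.le
          apply Finset.sum_le_sum
          intro j hj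
          rw [Finset.mem_Icc] at hj
          exact prodIcc_norm_le A γ μ hnorm (fun k hk => (hfac k hk).le) i j hj.1
      _ ≤ max C₀ (γ 1 * ((i₁ : ℝ) + C₀ / γ i₁)) := hscal
end
end

section
/- Let A be a symmetric positive definite d×d real matrix and {γ_i}_{i≥1} a positive non-increasing sequence, regularly varying with index −ρ for some ρ∈[0,1), with Σ_i γ_i=∞ and γ_1σ<1 for every eigenvalue σ of A. Define G_{N,i} = γ_i Σ_{j=i}^N ∏_{k=i+1}^j (I−γ_k A). Then for every ε>0 there exists T>0 such that for all sufficiently large N and all i ≤ N − T/γ_N, one has (1−ε)A^{−1} ⪯ G_{N,i} in the Loewner order. -/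
open Filter Finset
open scoped Topology RealInnerProductSpace

noncomputable section

lemma listProd_apply_eig {d : ℕ}
    (f : ℕ → EuclideanSpace ℝ (Fin d) →L[ℝ] EuclideanSpace ℝ (Fin d))
    (c : ℕ → ℝ) (v : EuclideanSpace ℝ (Fin d)) (h : ∀ k, f k v = c k • v) :
    ∀ L : List ℕ, ((L.map f).prod) v = ((L.map c).prod) • v := by
  intro L
  induction L with
  | nil => simp
  | cons a L ih =>
    simp only [List.map_cons, List.prod_cons, ContinuousLinearMap.mul_apply, ih,
      map_smul, h a, smul_smul]
    rw [mul_comm]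

lemma prodIcc_apply_eig {d : ℕ}
    (f : ℕ → EuclideanSpace ℝ (Fin d) →L[ℝ] EuclideanSpace ℝ (Fin d))
    (c : ℕ → ℝ) (v : EuclideanSpace ℝ (Fin d)) (h : ∀ k, f k v = c k • v) (a b : ℕ) :
    prodIcc f a b v = (∏ k ∈ Finset.Icc a b, c k) • v := by
  rw [prodIcc, listProd_apply_eig f c v h]
  have : ∀ n a, ((List.range' a n).map c).prod = ∏ k ∈ Finset.range n, c (a + k) := by
    intro n
    induction n with
    | zero => simp
    | succ n ih =>
      intro a
      rw [List.range'_concat, List.map_append, List.prod_append, ih, Finset.prod_range_succ]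
      simp
  rw [this, ← Finset.Ico_add_one_right_eq_Icc, Finset.prod_Ico_eq_prod_range]

lemma scalar_bound (γ : ℕ → ℝ) (hγpos : ∀ i, 1 ≤ i → 0 < γ i)
    (hγmono : ∀ i j, 1 ≤ i → i ≤ j → γ j ≤ γ i)
    (σ ε T : ℝ) (hσ : 0 < σ) (h1 : γ 1 * σ < 1) (hε : 0 < ε)
    (hT : Real.log ε⁻¹ / σ ≤ T) (hT0 : 0 < T)
    (N i : ℕ) (hN : 1 ≤ N) (hi : 1 ≤ i) (hiN : (i : ℝ) ≤ (N : ℝ) - T / γ N) :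
    (1 - ε) * σ⁻¹ ≤ γ i * ∑ j ∈ Finset.Icc i N, ∏ k ∈ Finset.Icc (i+1) j, (1 - γ k * σ) := by
  have hγN := hγpos N hN
  have hfac : ∀ k, 1 ≤ k → 0 < 1 - γ k * σ := by
    intro k hk
    have h2 : γ k * σ ≤ γ 1 * σ :=
      mul_le_mul_of_nonneg_right (hγmono 1 k le_rfl hk) hσ.le
    linarith
  set q : ℕ → ℝ := fun j => ∏ k ∈ Finset.Icc (i+1) j, (1 - γ k * σ) with hq
  have hqpos : ∀ j, 0 < q j := by
    intro j
    apply Finset.prod_pos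
    intro k hk
    have := (Finset.mem_Icc.1 hk).1
    exact hfac k (by omega)
  have hiltN : i < N := by
    have : (0:ℝ) < T / γ N := div_pos hT0 hγN
    exact_mod_cast Nat.cast_lt.mp (by push_cast; linarith : (i:ℝ) < (N:ℝ))
  -- telescoping
  have htel : ∑ j ∈ Finset.Icc i N, (q j - q (j+1)) = 1 - q (N+1) := by
    rw [← Finset.Ico_add_one_right_eq_Icc, Finset.sum_Ico_eq_sum_range]
    have h0 : ∀ k, q (i + k) - q (i + k + 1) = (fun k => q (i+k)) k - (fun k => q (i+k)) (k+1) := by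
      intro k; simp [add_assoc]
    simp only [h0]
    rw [Finset.sum_range_sub' (fun k => q (i + k))]
    have hqi : q i = 1 := by simp [hq]
    have : i + (N + 1 - i) = N + 1 := by omega
    rw [this]
    norm_num [hqi]
  -- per-term identity
  have hstep : ∀ j ∈ Finset.Icc i N, q j - q (j+1) = γ (j+1) * σ * q j := by
    intro j hj
    have hij : i ≤ j := (Finset.mem_Icc.1 hj).1
    have : q (j+1) = q j * (1 - γ (j+1) * σ) := by
      rw [hq]
      exact Finset.prod_Icc_succ_top (by omega) _
    rw [this]; ring
  -- bound: ∑ (q j - q(j+1)) ≤ γ i * σ * ∑ q j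
  have hbound : 1 - q (N+1) ≤ γ i * σ * ∑ j ∈ Finset.Icc i N, q j := by
    rw [← htel, Finset.mul_sum]
    apply Finset.sum_le_sum
    intro j hj
    rw [hstep j hj]
    have hij : i ≤ j := (Finset.mem_Icc.1 hj).1
    have h2 : γ (j+1) * σ ≤ γ i * σ :=
      mul_le_mul_of_nonneg_right (hγmono i (j+1) hi (by omega)) hσ.le
    exact mul_le_mul_of_nonneg_right h2 (hqpos j).le
  -- q(N+1) ≤ ε
  have hS : T ≤ ∑ k ∈ Finset.Icc (i+1) (N+1), γ k := by
    have h1' : ∑ k ∈ Finset.Icc (i+1) N, γ k ≤ ∑ k ∈ Finset.Icc (i+1) (N+1), γ k := by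
      apply Finset.sum_le_sum_of_subset_of_nonneg
      · exact Finset.Icc_subset_Icc_right (by omega)
      · intro k hk _; exact (hγpos k (by have := (Finset.mem_Icc.1 hk).1; omega)).le
    have h2' : (N - i : ℕ) • γ N ≤ ∑ k ∈ Finset.Icc (i+1) N, γ k := by
      have := Finset.card_nsmul_le_sum (Finset.Icc (i+1) N) γ (γ N) (by
        intro k hk
        have hk' := Finset.mem_Icc.1 hk
        exact hγmono k N (by omega) hk'.2)
      rwa [Nat.card_Icc, show N + 1 - (i+1) = N - i by omega] at this
    have hcast : ((N - i : ℕ) : ℝ) = (N : ℝ) - i := by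
      rw [Nat.cast_sub hiltN.le]
    have hT' : T ≤ ((N - i : ℕ) : ℝ) * γ N := by
      rw [hcast]
      exact (div_le_iff₀ hγN).1 (by linarith)
    calc T ≤ ((N - i:ℕ):ℝ) * γ N := hT'
    _ = (N - i : ℕ) • γ N := by rw [nsmul_eq_mul]
    _ ≤ _ := h2'.trans h1'
  have hqN : q (N+1) ≤ ε := by
    have hexp : q (N+1) ≤ Real.exp (-(σ * ∑ k ∈ Finset.Icc (i+1) (N+1), γ k)) := by
      have : q (N+1) ≤ ∏ k ∈ Finset.Icc (i+1) (N+1), Real.exp (-(γ k * σ)) := by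
        apply Finset.prod_le_prod
        · intro k hk; exact (hfac k (by have := (Finset.mem_Icc.1 hk).1; omega)).le
        · intro k hk
          have := Real.add_one_le_exp (-(γ k * σ))
          linarith
      rw [← Real.exp_sum] at this
      convert this using 2
      rw [Finset.mul_sum, ← Finset.sum_neg_distrib]
      exact Finset.sum_congr rfl (fun k _ => by ring)
    have h2 : Real.exp (-(σ * ∑ k ∈ Finset.Icc (i+1) (N+1), γ k)) ≤ Real.exp (-(σ * T)) := by
      apply Real.exp_le_exp.2
      have := mul_le_mul_of_nonneg_left hS hσ.le
      linarith
    have h3 : Real.exp (-(σ * T)) ≤ ε := by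
      have hlog : Real.log ε⁻¹ ≤ σ * T := by
        rw [div_le_iff₀ hσ] at hT; linarith [hT]
      calc Real.exp (-(σ * T)) ≤ Real.exp (-(Real.log ε⁻¹)) := by
            apply Real.exp_le_exp.2; linarith
        _ = ε := by rw [Real.exp_neg, Real.exp_log (by positivity)]; simp
    linarith
  have hfin : 1 - ε ≤ (γ i * ∑ j ∈ Finset.Icc i N, q j) * σ := by
    nlinarith [hbound, hqN]
  rw [show (1 - ε) * σ⁻¹ = (1-ε)/σ by ring, div_le_iff₀ hσ]
  exact hfin

lemma inner_eig {d : ℕ} (b : OrthonormalBasis (Fin d) ℝ (EuclideanSpace ℝ (Fin d)))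
    (L : EuclideanSpace ℝ (Fin d) →L[ℝ] EuclideanSpace ℝ (Fin d)) (g : Fin d → ℝ)
    (h : ∀ m, L (b m) = g m • b m) (x : EuclideanSpace ℝ (Fin d)) :
    ⟪L x, x⟫ = ∑ m, g m * (b.repr x m)^2 := by
  have hy : L x = ∑ m, (b.repr x m * g m) • b m := by
    conv_lhs => rw [← b.sum_repr x]
    rw [map_sum]
    exact Finset.sum_congr rfl fun m _ => by rw [map_smul, h m, smul_smul]
  rw [hy, sum_inner]
  apply Finset.sum_congr rfl
  intro m _
  rw [real_inner_smul_left, ← OrthonormalBasis.repr_apply_apply]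
  ring

/-- **Lemma A.7, lower bound**: for a symmetric positive definite `A` and a positive
non-increasing regularly varying learning-rate sequence `{γ_i}` with `Σγ_i = ∞` and
`γ₁σ < 1` for every eigenvalue `σ` of `A`, for every `ε > 0` there is `T > 0` such that
for all large `N` and all `i ≤ N − T/γ_N`, `(1−ε)A⁻¹ ⪯ G_{N,i}` in the Loewner order,
where `G_{N,i} = γ_i Σ_{j=i}^N ∏_{k=i+1}^j (I − γ_k A)`. -/
theorem GNi_Loewner_lower_bound
    {d : ℕ} (A : EuclideanSpace ℝ (Fin d) →L[ℝ] EuclideanSpace ℝ (Fin d))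
    (hAsym : IsSelfAdjoint A)
    (hApos : ∀ x : EuclideanSpace ℝ (Fin d), x ≠ 0 → 0 < ⟪A x, x⟫)
    (Ainv : EuclideanSpace ℝ (Fin d) →L[ℝ] EuclideanSpace ℝ (Fin d))
    (hAinv₁ : A.comp Ainv = ContinuousLinearMap.id ℝ (EuclideanSpace ℝ (Fin d)))
    (hAinv₂ : Ainv.comp A = ContinuousLinearMap.id ℝ (EuclideanSpace ℝ (Fin d)))
    (γ : ℕ → ℝ) (hγpos : ∀ i, 1 ≤ i → 0 < γ i)
    (hγmono : ∀ i j, 1 ≤ i → i ≤ j → γ j ≤ γ i)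
    (ρ : ℝ) (hρ0 : 0 ≤ ρ) (hρ1 : ρ < 1)
    (hγRV : ∀ lam : ℝ, 0 < lam →
      Tendsto (fun i : ℕ => γ ⌊lam * (i : ℝ)⌋₊ / γ i) atTop (𝓝 (lam ^ (-ρ))))
    (hγdiv : Tendsto (fun N => ∑ i ∈ Finset.Icc 1 N, γ i) atTop atTop)
    (heig : ∀ σ : ℝ, ∀ x : EuclideanSpace ℝ (Fin d), x ≠ 0 → A x = σ • x → γ 1 * σ < 1) :
    ∀ ε : ℝ, 0 < ε → ∃ T : ℝ, 0 < T ∧ ∀ᶠ N : ℕ in atTop, ∀ i : ℕ, 1 ≤ i →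
      (i : ℝ) ≤ (N : ℝ) - T / γ N →
      ∀ x : EuclideanSpace ℝ (Fin d),
        (1 - ε) * ⟪Ainv x, x⟫
          ≤ ⟪(γ i • ∑ j ∈ Finset.Icc i N,
                prodIcc (fun k => (1 : EuclideanSpace ℝ (Fin d) →L[ℝ] EuclideanSpace ℝ (Fin d))
                  - γ k • A) (i + 1) j) x, x⟫ := by
  intro ε hε
  by_cases hd : d = 0
  · subst hd
    refine ⟨1, one_pos, Filter.Eventually.of_forall fun N => fun i _ _ x => ?_⟩
    have hx : x = 0 := PiLp.ext fun m => m.elim0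
    subst hx
    simp
  -- eigen-decomposition
  have hsym : (A : EuclideanSpace ℝ (Fin d) →ₗ[ℝ] EuclideanSpace ℝ (Fin d)).IsSymmetric :=
    hAsym.isSymmetric
  have hrank : Module.finrank ℝ (EuclideanSpace ℝ (Fin d)) = d := finrank_euclideanSpace_fin
  set b := hsym.eigenvectorBasis hrank with hb
  set μ := hsym.eigenvalues hrank with hμ
  have heigvec : ∀ m, A (b m) = μ m • b m := fun m => hsym.apply_eigenvectorBasis hrank m
  have hbne : ∀ m, b m ≠ 0 := fun m => b.orthonormal.ne_zero m
  have hμpos : ∀ m, 0 < μ m := by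
    intro m
    have h0 := hApos (b m) (hbne m)
    rw [heigvec m, real_inner_smul_left, real_inner_self_eq_norm_sq, b.orthonormal.1 m] at h0
    simpa using h0
  have hμ1 : ∀ m, γ 1 * μ m < 1 := fun m => heig (μ m) (b m) (hbne m) (heigvec m)
  have hAinvb : ∀ m, Ainv (b m) = (μ m)⁻¹ • b m := by
    intro m
    have h0 : Ainv (A (b m)) = b m := by
      rw [← ContinuousLinearMap.comp_apply, hAinv₂]; rfl
    rw [heigvec m, map_smul] at h0
    have := congrArg (fun y => (μ m)⁻¹ • y) h0
    simpa [smul_smul, inv_mul_cancel₀ (hμpos m).ne'] using this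
  -- choice of T
  have hne : Nonempty (Fin d) := ⟨⟨0, Nat.pos_of_ne_zero hd⟩⟩
  set σmin : ℝ := Finset.univ.inf' Finset.univ_nonempty μ with hσmin
  have hσminpos : 0 < σmin := by
    rw [hσmin, Finset.lt_inf'_iff]
    exact fun m _ => hμpos m
  have hσmin_le : ∀ m, σmin ≤ μ m := fun m => Finset.inf'_le μ (Finset.mem_univ m)
  set T : ℝ := max 1 (Real.log ε⁻¹ / σmin) with hTdef
  have hT0 : 0 < T := lt_of_lt_of_le one_pos (le_max_left _ _)
  have hTm : ∀ m, Real.log ε⁻¹ / μ m ≤ T := by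
    intro m
    rcases le_or_gt (Real.log ε⁻¹) 0 with h | h
    · have : Real.log ε⁻¹ / μ m ≤ 0 := div_nonpos_of_nonpos_of_nonneg h (hμpos m).le
      linarith
    · calc Real.log ε⁻¹ / μ m ≤ Real.log ε⁻¹ / σmin :=
            div_le_div_of_nonneg_left h.le hσminpos (hσmin_le m)
      _ ≤ T := le_max_right _ _
  refine ⟨T, hT0, ?_⟩
  filter_upwards [eventually_ge_atTop 1] with N hN
  intro i hi hiN x
  -- action of G on the eigenbasis
  set g : Fin d → ℝ :=
    fun m => γ i * ∑ j ∈ Finset.Icc i N, ∏ k ∈ Finset.Icc (i+1) j, (1 - γ k * μ m) with hg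
  have hG : ∀ m, (γ i • ∑ j ∈ Finset.Icc i N,
      prodIcc (fun k => (1 : EuclideanSpace ℝ (Fin d) →L[ℝ] EuclideanSpace ℝ (Fin d))
        - γ k • A) (i + 1) j) (b m) = g m • b m := by
    intro m
    have hfk : ∀ k, ((1 : EuclideanSpace ℝ (Fin d) →L[ℝ] EuclideanSpace ℝ (Fin d))
        - γ k • A) (b m) = (1 - γ k * μ m) • b m := by
      intro k
      rw [ContinuousLinearMap.sub_apply, ContinuousLinearMap.one_apply,
        ContinuousLinearMap.smul_apply, heigvec m, smul_smul, sub_smul, one_smul]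
    rw [ContinuousLinearMap.smul_apply, ContinuousLinearMap.sum_apply]
    have : ∀ j ∈ Finset.Icc i N,
        prodIcc (fun k => (1 : EuclideanSpace ℝ (Fin d) →L[ℝ] EuclideanSpace ℝ (Fin d))
          - γ k • A) (i + 1) j (b m)
        = (∏ k ∈ Finset.Icc (i+1) j, (1 - γ k * μ m)) • b m := fun j _ =>
      prodIcc_apply_eig _ (fun k => 1 - γ k * μ m) (b m) hfk (i+1) j
    rw [Finset.sum_congr rfl this, ← Finset.sum_smul, smul_smul, hg]
  rw [inner_eig b _ g hG x, inner_eig b Ainv (fun m => (μ m)⁻¹) hAinvb x, Finset.mul_sum]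
  apply Finset.sum_le_sum
  intro m _
  rw [← mul_assoc]
  exact mul_le_mul_of_nonneg_right
    (scalar_bound γ hγpos hγmono (μ m) ε T (hμpos m) (hμ1 m) hε (hTm m) hT0 N i hN hi hiN)
    (sq_nonneg _)
end
end

section
/- Let A be a symmetric positive definite d×d real matrix and {γ_i}_{i≥1} a positive non-increasing sequence, regularly varying with index −ρ for some ρ∈[0,1), such that {1/γ_i} is concave and γ_1σ<1 for every eigenvalue σ of A. Define G_{N,i} = γ_i Σ_{j=i}^N ∏_{k=i+1}^j (I−γ_k A). Then for every ε>0 there exists i_0 such that for all i≥i_0 and all N≥i, G_{N,i} ⪯ (1+ε)A^{−1} in the Loewner order. -/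
/-!
In an orthonormal eigenbasis of `A` both quadratic forms are diagonal, so it suffices to bound,
for each eigenvalue `σ`, the scalar `γ_i Σ_{j=i}^N P_j` with `P_j = ∏_{k=i+1}^j (1 - γ_k σ)`.
Summation by parts, using `σ P_j = (P_j - P_{j+1}) / γ_{j+1}` and the non-increasing increments
`δ_j = 1/γ_{j+1} - 1/γ_j` of the concave sequence `1/γ`, gives
`(σ - δ_i) γ_i Σ_j P_j ≤ γ_i / γ_{i+1} = 1 + γ_i δ_i`, uniformly in `N`. Regular variation with
index `-ρ > -1` forces `δ_i → 0`, so the right-hand side over `σ - δ_i` tends to `1/σ`.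
-/

open Filter Finset
open scoped Topology RealInnerProductSpace

noncomputable section

theorem prodIcc_eq_prod {M : Type*} [CommMonoid M] (f : ℕ → M) (a b : ℕ) :
    prodIcc f a b = ∏ k ∈ Icc a b, f k := by
  rw [prodIcc, Nat.Icc_eq_range']
  rfl

section Eigen

variable {E : Type*} [NormedAddCommGroup E] [InnerProductSpace ℝ E]

theorem List.prod_map_apply_of_eigen {α : Type*} (l : List α) {f : α → E →L[ℝ] E} {c : α → ℝ}
    {v : E} (h : ∀ k, f k v = c k • v) : (l.map f).prod v = (l.map c).prod • v := by
  induction l with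
  | nil => simp
  | cons a l ih =>
    simp only [List.map_cons, List.prod_cons, mul_apply_eq_comp, ih, map_smul, h,
      smul_smul, mul_comm]

theorem prodIcc_apply_of_eigen {f : ℕ → E →L[ℝ] E} {c : ℕ → ℝ} {v : E}
    (h : ∀ k, f k v = c k • v) (a b : ℕ) : prodIcc f a b v = (∏ k ∈ Icc a b, c k) • v := by
  rw [← prodIcc_eq_prod, prodIcc, prodIcc]
  exact List.prod_map_apply_of_eigen _ h

theorem smul_sum_prodIcc_apply_of_eigen (γ : ℕ → ℝ) {A : E →L[ℝ] E} {v : E} {σ : ℝ}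
    (hv : A v = σ • v) (i N : ℕ) :
    (γ i • ∑ j ∈ Icc i N, prodIcc (fun k => (1 : E →L[ℝ] E) - γ k • A) (i + 1) j) v
      = (γ i * ∑ j ∈ Icc i N, ∏ k ∈ Icc (i + 1) j, (1 - γ k * σ)) • v := by
  have hfac : ∀ k, ((1 : E →L[ℝ] E) - γ k • A) v = (1 - γ k * σ) • v := fun k => by
    simp [hv, sub_smul, smul_smul]
  simp only [smul_apply, _root_.sum_apply, prodIcc_apply_of_eigen hfac, ← sum_smul, smul_smul]

theorem eigenvalue_pos_of_inner_pos {A : E →L[ℝ] E} (hA : ∀ x, x ≠ 0 → 0 < ⟪A x, x⟫) {v : E}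
    (hv0 : v ≠ 0) {σ : ℝ} (hv : A v = σ • v) : 0 < σ := by
  have := hA v hv0
  rw [hv, real_inner_smul_left] at this
  exact pos_of_mul_pos_left this real_inner_self_nonneg

theorem apply_eq_inv_smul_of_eigen {A B : E →L[ℝ] E} (hBA : B.comp A = ContinuousLinearMap.id ℝ E)
    {v : E} {σ : ℝ} (hσ : σ ≠ 0) (hv : A v = σ • v) : B v = σ⁻¹ • v := by
  rw [eq_inv_smul_iff₀ hσ, ← map_smul, ← hv, ← ContinuousLinearMap.comp_apply, hBA,
    ContinuousLinearMap.id_apply]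

theorem inner_apply_self_eq_sum_of_eigen {ι : Type*} [Fintype ι] (b : OrthonormalBasis ι ℝ E)
    {B : E →L[ℝ] E} {β : ι → ℝ} (hB : ∀ n, B (b n) = β n • b n) (x : E) :
    ⟪B x, x⟫ = ∑ n, β n * b.repr x n ^ 2 := by
  have hBx : B x = ∑ n, (β n * b.repr x n) • b n := by
    conv_lhs => rw [← b.sum_repr x]
    simp only [map_sum, map_smul, hB, smul_smul, mul_comm]
  rw [hBx, sum_inner]
  refine sum_congr rfl fun n _ => ?_
  rw [real_inner_smul_left, ← b.repr_apply_apply]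
  ring

theorem inner_apply_self_le_of_eigen {ι : Type*} [Fintype ι] (b : OrthonormalBasis ι ℝ E)
    {B C : E →L[ℝ] E} {β κ : ι → ℝ} (hB : ∀ n, B (b n) = β n • b n)
    (hC : ∀ n, C (b n) = κ n • b n) (hβκ : ∀ n, β n ≤ κ n) (x : E) : ⟪B x, x⟫ ≤ ⟪C x, x⟫ := by
  rw [inner_apply_self_eq_sum_of_eigen b hB, inner_apply_self_eq_sum_of_eigen b hC]
  exact sum_le_sum fun n _ => mul_le_mul_of_nonneg_right (hβκ n) (sq_nonneg _)

end Eigen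

theorem tendsto_div_natCast_of_tendsto_sub {h : ℕ → ℝ} {L : ℝ}
    (hL : Tendsto (fun n => h (n + 1) - h n) atTop (𝓝 L)) :
    Tendsto (fun n : ℕ => h n / n) atTop (𝓝 L) := by
  have hsplit : (fun n : ℕ => h n / n)
      = fun n : ℕ => h 0 * (n : ℝ)⁻¹ + (n : ℝ)⁻¹ * ∑ j ∈ range n, (h (j + 1) - h j) := by
    ext n
    rw [sum_range_sub]
    ring
  have hfirst : Tendsto (fun n : ℕ => h 0 * (n : ℝ)⁻¹) atTop (𝓝 0) := by
    simpa using tendsto_inv_atTop_nhds_zero_nat.const_mul (h 0)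
  simpa [hsplit] using hfirst.add hL.cesaro

theorem mul_sum_prod_add_eq (γ : ℕ → ℝ) (σ : ℝ) {i N : ℕ} (hγ : ∀ j, i < j → γ j ≠ 0)
    (hN : i ≤ N) :
    σ * ∑ j ∈ Icc i N, ∏ k ∈ Icc (i + 1) j, (1 - γ k * σ)
        + (∏ k ∈ Icc (i + 1) (N + 1), (1 - γ k * σ)) / γ (N + 1)
      = (γ (i + 1))⁻¹
        + ∑ j ∈ Icc (i + 1) N, ((γ (j + 1))⁻¹ - (γ j)⁻¹) * ∏ k ∈ Icc (i + 1) j, (1 - γ k * σ) := by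
  induction N, hN using Nat.le_induction with
  | base =>
    have := hγ (i + 1) (by omega)
    simp only [Icc_self, sum_singleton, Icc_eq_empty_of_lt (Nat.lt_succ_self i), prod_empty,
      sum_empty, prod_singleton]
    field_simp
    ring
  | succ N hN ih =>
    have h1 := hγ (N + 1) (by omega)
    have h2 := hγ (N + 2) (by omega)
    rw [sum_Icc_succ_top (by omega), sum_Icc_succ_top (by omega), ← add_assoc, ← ih,
      prod_Icc_succ_top (by omega : i + 1 ≤ N + 2)]
    field_simp
    ring

section Concave

variable {γ : ℕ → ℝ} (hγpos : ∀ i, 1 ≤ i → 0 < γ i)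
    (hγmono : ∀ i j, 1 ≤ i → i ≤ j → γ j ≤ γ i)
    (hγconcave : ∀ i, 1 ≤ i → (γ (i + 2))⁻¹ - (γ (i + 1))⁻¹ ≤ (γ (i + 1))⁻¹ - (γ i)⁻¹)

include hγpos hγmono in
theorem inv_sub_inv_nonneg {i : ℕ} (hi : 1 ≤ i) : 0 ≤ (γ (i + 1))⁻¹ - (γ i)⁻¹ :=
  sub_nonneg.2 <| inv_anti₀ (hγpos (i + 1) (by omega)) (hγmono i (i + 1) hi (by omega))

include hγconcave in
theorem inv_sub_inv_le_of_le {i j : ℕ} (hi : 1 ≤ i) (hij : i ≤ j) :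
    (γ (j + 1))⁻¹ - (γ j)⁻¹ ≤ (γ (i + 1))⁻¹ - (γ i)⁻¹ := by
  induction j, hij using Nat.le_induction with
  | base => exact le_rfl
  | succ j hij ih => exact (hγconcave j (hi.trans hij)).trans ih

include hγpos hγmono hγconcave in
/-- The increments of `1/γ` decrease to a limit `L`, and by Cesàro `1/γ_n ∼ L n`; if `L ≠ 0` this
gives `γ_{2n} / γ_n → 1/2 < 2^(-ρ)`. -/
theorem tendsto_inv_sub_inv_zero {ρ : ℝ} (hρ : ρ < 1)
    (hγ2 : Tendsto (fun i : ℕ => γ (2 * i) / γ i) atTop (𝓝 ((2 : ℝ) ^ (-ρ)))) :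
    Tendsto (fun i => (γ (i + 1))⁻¹ - (γ i)⁻¹) atTop (𝓝 0) := by
  set δ : ℕ → ℝ := fun i => (γ (i + 1))⁻¹ - (γ i)⁻¹
  have hanti : Antitone fun n => δ (n + 1) :=
    antitone_nat_of_succ_le fun n => hγconcave (n + 1) (by omega)
  have hbdd : BddBelow (Set.range fun n => δ (n + 1)) :=
    ⟨0, by rintro _ ⟨n, rfl⟩; exact inv_sub_inv_nonneg hγpos hγmono (by omega)⟩
  set L := ⨅ n, δ (n + 1)
  have hL : Tendsto δ atTop (𝓝 L) :=
    (tendsto_add_atTop_iff_nat 1).1 (tendsto_atTop_ciInf hanti hbdd)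
  suffices L = 0 by rwa [← this]
  by_contra hLne
  have hlin : Tendsto (fun n : ℕ => (γ n)⁻¹ / n) atTop (𝓝 L) :=
    tendsto_div_natCast_of_tendsto_sub hL
  have hlin2 : Tendsto (fun n : ℕ => (γ (2 * n))⁻¹ / (2 * n : ℕ)) atTop (𝓝 L) :=
    hlin.comp (tendsto_id.const_mul_atTop' two_pos)
  have hhalf : Tendsto (fun i : ℕ => γ (2 * i) / γ i) atTop (𝓝 (1 / 2)) := by
    have := (hlin.div hlin2 hLne).div_const 2
    rw [div_self hLne] at this
    refine this.congr' ?_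
    filter_upwards [eventually_ge_atTop 1] with n hn
    have hn' : (n : ℝ) ≠ 0 := by positivity
    have hγn := (hγpos n hn).ne'
    have hγ2n := (hγpos (2 * n) (by omega)).ne'
    simp only [Pi.div_apply]
    push_cast
    field_simp
  have hlt : (2 : ℝ) ^ (-1 : ℝ) < 2 ^ (-ρ) :=
    Real.rpow_lt_rpow_of_exponent_lt one_lt_two (by linarith)
  rw [tendsto_nhds_unique hγ2 hhalf, Real.rpow_neg_one] at hlt
  norm_num at hlt

include hγpos hγmono hγconcave in
theorem sub_mul_sum_prod_le {σ : ℝ} (hσ : 0 ≤ σ) (hσγ : γ 1 * σ ≤ 1) {i N : ℕ} (hi : 1 ≤ i)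
    (hN : i ≤ N) :
    (σ - ((γ (i + 1))⁻¹ - (γ i)⁻¹)) * ∑ j ∈ Icc i N, ∏ k ∈ Icc (i + 1) j, (1 - γ k * σ)
      ≤ (γ (i + 1))⁻¹ := by
  set δ : ℕ → ℝ := fun j => (γ (j + 1))⁻¹ - (γ j)⁻¹
  set P : ℕ → ℝ := fun j => ∏ k ∈ Icc (i + 1) j, (1 - γ k * σ)
  have hP : ∀ j, 0 ≤ P j := fun j => prod_nonneg fun k hk => by
    have hk1 : 1 ≤ k := by grind
    nlinarith [hγmono 1 k le_rfl hk1]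
  have hδ : ∑ j ∈ Icc (i + 1) N, δ j * P j ≤ δ i * ∑ j ∈ Icc i N, P j := by
    calc ∑ j ∈ Icc (i + 1) N, δ j * P j ≤ ∑ j ∈ Icc (i + 1) N, δ i * P j :=
          sum_le_sum fun j hj => mul_le_mul_of_nonneg_right
            (inv_sub_inv_le_of_le hγconcave hi (by grind)) (hP j)
      _ ≤ δ i * ∑ j ∈ Icc i N, P j := by
          rw [← mul_sum]
          exact mul_le_mul_of_nonneg_left
            (sum_le_sum_of_subset_of_nonneg (Icc_subset_Icc_left (by omega)) fun j _ _ => hP j)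
            (inv_sub_inv_nonneg hγpos hγmono hi)
  have hid := mul_sum_prod_add_eq γ σ (fun j hj => (hγpos j (by omega)).ne') hN
  have hlast : 0 ≤ P (N + 1) / γ (N + 1) := div_nonneg (hP _) (hγpos _ (by omega)).le
  change σ * ∑ j ∈ Icc i N, P j + P (N + 1) / γ (N + 1) = _ + ∑ j ∈ Icc (i + 1) N, δ j * P j
    at hid
  rw [sub_mul]
  linarith

include hγpos hγmono hγconcave in
theorem eventually_mul_sum_prod_le
    (hδ : Tendsto (fun i => (γ (i + 1))⁻¹ - (γ i)⁻¹) atTop (𝓝 0))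
    {σ : ℝ} (hσ : 0 < σ) (hσγ : γ 1 * σ ≤ 1) {ε : ℝ} (hε : 0 < ε) :
    ∀ᶠ i in atTop, ∀ N, i ≤ N →
      γ i * ∑ j ∈ Icc i N, ∏ k ∈ Icc (i + 1) j, (1 - γ k * σ) ≤ (1 + ε) / σ := by
  have hlim : Tendsto (fun i => (1 + γ 1 * ((γ (i + 1))⁻¹ - (γ i)⁻¹))
      / (σ - ((γ (i + 1))⁻¹ - (γ i)⁻¹))) atTop (𝓝 (1 / σ)) := by
    have := ((tendsto_const_nhds (x := (1 : ℝ))).add (hδ.const_mul (γ 1))).div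
      ((tendsto_const_nhds (x := σ)).sub hδ) (by simpa using hσ.ne')
    simpa [Pi.div_def] using this
  have hlt : 1 / σ < (1 + ε) / σ := div_lt_div_of_pos_right (by linarith) hσ
  filter_upwards [eventually_ge_atTop 1, hδ.eventually_lt_const hσ,
    hlim.eventually_le_const hlt] with i hi hδσ hbound N hN
  set δ := (γ (i + 1))⁻¹ - (γ i)⁻¹
  set S := ∑ j ∈ Icc i N, ∏ k ∈ Icc (i + 1) j, (1 - γ k * σ)
  have hγi := hγpos i hi
  have hγi1 := hγpos (i + 1) (by omega)
  have hratio : γ i * (γ (i + 1))⁻¹ ≤ 1 + γ 1 * δ := by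
    have : γ i * (γ (i + 1))⁻¹ = 1 + γ i * δ := by simp only [δ]; field_simp; ring
    rw [this]
    gcongr
    · exact inv_sub_inv_nonneg hγpos hγmono hi
    · exact hγmono 1 i le_rfl hi
  calc γ i * S ≤ (1 + γ 1 * δ) / (σ - δ) := by
        rw [le_div_iff₀ (by linarith)]
        nlinarith [sub_mul_sum_prod_le hγpos hγmono hγconcave hσ.le hσγ hi hN]
    _ ≤ (1 + ε) / σ := hbound

end Concave

theorem GNi_Loewner_upper_bound_general
    {d : ℕ} (A : EuclideanSpace ℝ (Fin d) →L[ℝ] EuclideanSpace ℝ (Fin d))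
    (hAsym : IsSelfAdjoint A)
    (hApos : ∀ x : EuclideanSpace ℝ (Fin d), x ≠ 0 → 0 < ⟪A x, x⟫)
    (Ainv : EuclideanSpace ℝ (Fin d) →L[ℝ] EuclideanSpace ℝ (Fin d))
    (hAinv₂ : Ainv.comp A = ContinuousLinearMap.id ℝ (EuclideanSpace ℝ (Fin d)))
    (γ : ℕ → ℝ) (hγpos : ∀ i, 1 ≤ i → 0 < γ i)
    (hγmono : ∀ i j, 1 ≤ i → i ≤ j → γ j ≤ γ i)
    (ρ : ℝ) (hρ1 : ρ < 1)
    (hγRV : ∀ lam : ℝ, 0 < lam →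
      Tendsto (fun i : ℕ => γ ⌊lam * (i : ℝ)⌋₊ / γ i) atTop (𝓝 (lam ^ (-ρ))))
    (hγconcave : ∀ i, 1 ≤ i → (γ (i + 2))⁻¹ - (γ (i + 1))⁻¹ ≤ (γ (i + 1))⁻¹ - (γ i)⁻¹)
    (heig : ∀ σ : ℝ, ∀ x : EuclideanSpace ℝ (Fin d), x ≠ 0 → A x = σ • x → γ 1 * σ < 1) :
    ∀ ε : ℝ, 0 < ε → ∃ i₀ : ℕ, 1 ≤ i₀ ∧ ∀ i, i₀ ≤ i → ∀ N, i ≤ N →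
      ∀ x : EuclideanSpace ℝ (Fin d),
        ⟪(γ i • ∑ j ∈ Finset.Icc i N,
              prodIcc (fun k => (1 : EuclideanSpace ℝ (Fin d) →L[ℝ] EuclideanSpace ℝ (Fin d))
                - γ k • A) (i + 1) j) x, x⟫
          ≤ (1 + ε) * ⟪Ainv x, x⟫ := by
  intro ε hε
  have hγ2 : Tendsto (fun i : ℕ => γ (2 * i) / γ i) atTop (𝓝 ((2 : ℝ) ^ (-ρ))) :=
    (hγRV 2 two_pos).congr fun i => by rw [← Nat.cast_ofNat, ← Nat.cast_mul, Nat.floor_natCast]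
  have hδ := tendsto_inv_sub_inv_zero hγpos hγmono hγconcave hρ1 hγ2
  have hT : (A : EuclideanSpace ℝ (Fin d) →ₗ[ℝ] EuclideanSpace ℝ (Fin d)).IsSymmetric :=
    ContinuousLinearMap.isSelfAdjoint_iff_isSymmetric.mp hAsym
  set b := hT.eigenvectorBasis finrank_euclideanSpace_fin
  set μ := hT.eigenvalues finrank_euclideanSpace_fin
  have hAb : ∀ n, A (b n) = μ n • b n := hT.apply_eigenvectorBasis _
  have hμpos : ∀ n, 0 < μ n := fun n =>
    eigenvalue_pos_of_inner_pos hApos (b.orthonormal.ne_zero n) (hAb n)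
  obtain ⟨i₀, hi₀⟩ := eventually_atTop.1 <| eventually_all.2 fun n =>
    eventually_mul_sum_prod_le hγpos hγmono hγconcave hδ (hμpos n)
      (heig _ _ (b.orthonormal.ne_zero n) (hAb n)).le hε
  refine ⟨i₀ + 1, by omega, fun i hi N hN x => ?_⟩
  rw [← real_inner_smul_left, ← smul_apply]
  refine inner_apply_self_le_of_eigen b (fun n => smul_sum_prodIcc_apply_of_eigen γ (hAb n) i N)
    (fun n => ?_) (fun n => (hi₀ i (by omega) n N hN).trans_eq (div_eq_mul_inv _ _)) x
  rw [smul_apply, apply_eq_inv_smul_of_eigen hAinv₂ (hμpos n).ne' (hAb n), smul_smul]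

/-- **Lemma A.7, upper bound**: for a symmetric positive definite `A` and a positive
non-increasing regularly varying learning-rate sequence `{γ_i}` with `{1/γ_i}` concave and
`γ₁σ < 1` for every eigenvalue `σ` of `A`, for every `ε > 0` there is `i₀` such that for
all `i ≥ i₀` and all `N ≥ i`, `G_{N,i} ⪯ (1+ε)A⁻¹` in the Loewner order, where
`G_{N,i} = γ_i Σ_{j=i}^N ∏_{k=i+1}^j (I − γ_k A)`. -/
theorem GNi_Loewner_upper_bound
    {d : ℕ} (A : EuclideanSpace ℝ (Fin d) →L[ℝ] EuclideanSpace ℝ (Fin d))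
    (hAsym : IsSelfAdjoint A)
    (hApos : ∀ x : EuclideanSpace ℝ (Fin d), x ≠ 0 → 0 < ⟪A x, x⟫)
    (Ainv : EuclideanSpace ℝ (Fin d) →L[ℝ] EuclideanSpace ℝ (Fin d))
    (hAinv₁ : A.comp Ainv = ContinuousLinearMap.id ℝ (EuclideanSpace ℝ (Fin d)))
    (hAinv₂ : Ainv.comp A = ContinuousLinearMap.id ℝ (EuclideanSpace ℝ (Fin d)))
    (γ : ℕ → ℝ) (hγpos : ∀ i, 1 ≤ i → 0 < γ i)
    (hγmono : ∀ i j, 1 ≤ i → i ≤ j → γ j ≤ γ i)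
    (ρ : ℝ) (hρ0 : 0 ≤ ρ) (hρ1 : ρ < 1)
    (hγRV : ∀ lam : ℝ, 0 < lam →
      Tendsto (fun i : ℕ => γ ⌊lam * (i : ℝ)⌋₊ / γ i) atTop (𝓝 (lam ^ (-ρ))))
    (hγconcave : ∀ i, 1 ≤ i → (γ (i + 2))⁻¹ - (γ (i + 1))⁻¹ ≤ (γ (i + 1))⁻¹ - (γ i)⁻¹)
    (heig : ∀ σ : ℝ, ∀ x : EuclideanSpace ℝ (Fin d), x ≠ 0 → A x = σ • x → γ 1 * σ < 1) :
    ∀ ε : ℝ, 0 < ε → ∃ i₀ : ℕ, 1 ≤ i₀ ∧ ∀ i, i₀ ≤ i → ∀ N, i ≤ N →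
      ∀ x : EuclideanSpace ℝ (Fin d),
        ⟪(γ i • ∑ j ∈ Finset.Icc i N,
              prodIcc (fun k => (1 : EuclideanSpace ℝ (Fin d) →L[ℝ] EuclideanSpace ℝ (Fin d))
                - γ k • A) (i + 1) j) x, x⟫
          ≤ (1 + ε) * ⟪Ainv x, x⟫ :=
  GNi_Loewner_upper_bound_general A hAsym hApos Ainv hAinv₂ γ hγpos hγmono ρ hρ1 hγRV hγconcave heig
end
end

section
/- Let {γ_i}_{i≥1} be a positive non-increasing sequence, regularly varying with index −ρ for some ρ∈[0,1), and let G:[0,∞)→[0,∞) be the piecewise linear function with G(0)=0 and G(N)=Σ_{i=1}^N γ_i for every integer N≥1. Then for every K>0, lim_{N→∞} (G(N) − G(N − K/γ_N)) = K. -/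
open Filter Finset
open scoped Topology

noncomputable section

/-- The piecewise linear function with `G(0) = 0` and `G(N) = Σ_{i=1}^N γ_i` at integers. -/
def Gfun (γ : ℕ → ℝ) (x : ℝ) : ℝ :=
  (∑ i ∈ Finset.Icc 1 ⌊x⌋₊, γ i) + (x - (⌊x⌋₊ : ℝ)) * γ (⌊x⌋₊ + 1)

lemma Gfun_diff_bounds (γ : ℕ → ℝ)
    (hγmono : ∀ i j, 1 ≤ i → i ≤ j → γ j ≤ γ i)
    (N : ℕ) (x : ℝ) (hx0 : 0 ≤ x) (hxN : x ≤ (N:ℝ)) :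
    ((N:ℝ) - x) * γ N ≤ Gfun γ (N:ℝ) - Gfun γ x ∧
      Gfun γ (N:ℝ) - Gfun γ x ≤ ((N:ℝ) - x) * γ (⌊x⌋₊ + 1) := by
  rcases eq_or_lt_of_le hxN with h | h
  · rw [← h]; simp
  · set m := ⌊x⌋₊ with hm
    have hmlt : m < N := (Nat.floor_lt hx0).2 h
    have hmx : (m:ℝ) ≤ x := Nat.floor_le hx0
    have hxm1 : x < (m:ℝ) + 1 := Nat.lt_floor_add_one x
    have hm1N : m + 1 ≤ N := hmlt
    have hGN : Gfun γ (N:ℝ) = ∑ i ∈ Icc 1 N, γ i := by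
      simp [Gfun, Nat.floor_natCast]
    have hsplit1 : ∑ i ∈ Ioc 0 m, γ i + ∑ i ∈ Ioc m N, γ i = ∑ i ∈ Ioc 0 N, γ i :=
      Finset.sum_Ioc_consecutive γ (Nat.zero_le m) (le_of_lt hmlt)
    have hsplit2 : ∑ i ∈ Ioc m (m+1), γ i + ∑ i ∈ Ioc (m+1) N, γ i = ∑ i ∈ Ioc m N, γ i :=
      Finset.sum_Ioc_consecutive γ (Nat.le_succ m) hm1N
    have hsingle : ∑ i ∈ Ioc m (m+1), γ i = γ (m+1) := by
      rw [← Finset.Icc_add_one_left_eq_Ioc]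
      simp
    set S := ∑ i ∈ Ioc (m+1) N, γ i with hS
    have hdiff : Gfun γ (N:ℝ) - Gfun γ x
        = γ (m+1) + S - (x - (m:ℝ)) * γ (m+1) := by
      rw [hGN, Gfun, ← hm]
      have e1 : (Icc 1 N) = Ioc 0 N := (Finset.Icc_add_one_left_eq_Ioc 0 N)
      have e2 : (Icc 1 m) = Ioc 0 m := (Finset.Icc_add_one_left_eq_Ioc 0 m)
      rw [e1, e2, ← hsplit1, ← hsplit2, hsingle]
      ring
    have hcard : (Ioc (m+1) N).card = N - (m+1) := Nat.card_Ioc _ _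
    have hcardR : ((Ioc (m+1) N).card : ℝ) = (N:ℝ) - (m:ℝ) - 1 := by
      rw [hcard, Nat.cast_sub hm1N]; push_cast; ring
    have hSlow : ((N:ℝ) - (m:ℝ) - 1) * γ N ≤ S := by
      have := Finset.card_nsmul_le_sum (Ioc (m+1) N) γ (γ N) (fun i hi => by
        have hi' := Finset.mem_Ioc.1 hi
        exact hγmono i N (le_trans (Nat.le_add_left 1 m) (le_of_lt hi'.1)) hi'.2)
      rwa [nsmul_eq_mul, hcardR] at this
    have hShigh : S ≤ ((N:ℝ) - (m:ℝ) - 1) * γ (m+1) := by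
      have := Finset.sum_le_card_nsmul (Ioc (m+1) N) γ (γ (m+1)) (fun i hi => by
        have hi' := Finset.mem_Ioc.1 hi
        exact hγmono (m+1) i (Nat.le_add_left 1 m) (le_of_lt hi'.1))
      rwa [nsmul_eq_mul, hcardR] at this
    have hAB : γ N ≤ γ (m+1) := hγmono (m+1) N (Nat.le_add_left 1 m) hm1N
    constructor
    · rw [hdiff]
      nlinarith [mul_nonneg (sub_nonneg.2 hAB) (by linarith : (0:ℝ) ≤ (m:ℝ) + 1 - x)]
    · rw [hdiff]; nlinarith

set_option maxHeartbeats 1000000 in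
lemma mul_self_tendsto_atTop (γ : ℕ → ℝ) (hγpos : ∀ i, 1 ≤ i → 0 < γ i)
    (hγmono : ∀ i j, 1 ≤ i → i ≤ j → γ j ≤ γ i)
    (ρ : ℝ) (hρ1 : ρ < 1)
    (hγRV : ∀ lam : ℝ, 0 < lam →
      Tendsto (fun i : ℕ => γ ⌊lam * (i : ℝ)⌋₊ / γ i) atTop (𝓝 (lam ^ (-ρ)))) :
    Tendsto (fun N : ℕ => (N:ℝ) * γ N) atTop atTop := by
  have h2 : Tendsto (fun i : ℕ => γ (2*i) / γ i) atTop (𝓝 ((2:ℝ) ^ (-ρ))) := by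
    have := hγRV 2 (by norm_num)
    refine this.congr' ?_
    filter_upwards [eventually_ge_atTop 0] with i _
    congr 2
    rw [show (2:ℝ) * (i:ℝ) = ((2*i : ℕ):ℝ) by push_cast; ring, Nat.floor_natCast]
  have hhalf : (2:ℝ)⁻¹ < (2:ℝ) ^ (-ρ) := by
    have : (2:ℝ) ^ (-1:ℝ) < (2:ℝ) ^ (-ρ) := by
      apply Real.rpow_lt_rpow_left_iff (by norm_num : (1:ℝ) < 2) |>.2
      linarith
    rwa [Real.rpow_neg_one] at this
  set c : ℝ := ((2:ℝ) ^ (-ρ) + 2⁻¹) / 2 with hc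
  have hc1 : (2:ℝ)⁻¹ < c := by rw [hc]; linarith
  have hc2 : c < (2:ℝ) ^ (-ρ) := by rw [hc]; linarith
  have hcpos : 0 < c := lt_trans (by norm_num) hc1
  have hev : ∀ᶠ n : ℕ in atTop, c < γ (2*n) / γ n := h2.eventually_const_lt hc2
  obtain ⟨n0', hn0'⟩ := eventually_atTop.1 hev
  set n0 := max n0' 1 with hn0def
  have hn0pos : 0 < n0 := lt_of_lt_of_le one_pos (le_max_right _ _)
  have hstep : ∀ n, n0 ≤ n → c * γ n ≤ γ (2*n) := by
    intro n hn
    have h1n : 1 ≤ n := le_trans (le_max_right _ _) hn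
    have := hn0' n (le_trans (le_max_left _ _) hn)
    have hpos := hγpos n h1n
    rw [lt_div_iff₀ hpos] at this
    linarith
  set u : ℕ → ℝ := fun n => (n:ℝ) * γ n with hu
  have hu0 : 0 < u n0 := mul_pos (by exact_mod_cast hn0pos) (hγpos n0 hn0pos)
  have hdyadic : ∀ k : ℕ, (2*c)^k * u n0 ≤ u (2^k * n0) := by
    intro k
    induction k with
    | zero => simp [hu]
    | succ k ih =>
      have hge : n0 ≤ 2^k * n0 := Nat.le_mul_of_pos_left n0 (Nat.pow_pos (by norm_num))
      have h1 : c * γ (2^k * n0) ≤ γ (2 * (2^k * n0)) := hstep _ hge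
      have heq : 2^(k+1) * n0 = 2 * (2^k * n0) := by ring
      have hmul := mul_le_mul_of_nonneg_left h1
        (by positivity : (0:ℝ) ≤ (2:ℝ)^k * (n0:ℝ))
      calc (2*c)^(k+1) * u n0 = (2*c) * ((2*c)^k * u n0) := by ring
        _ ≤ (2*c) * u (2^k * n0) := by
            apply mul_le_mul_of_nonneg_left ih; positivity
        _ ≤ u (2^(k+1) * n0) := by
            rw [hu]
            simp only [heq]
            push_cast
            nlinarith [hmul]
  have hbound : ∀ N, n0 ≤ N →
      (2⁻¹ * u n0) * (2*c)^(Nat.log 2 (N / n0) + 1) ≤ u N := by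
    intro N hN
    set k := Nat.log 2 (N / n0) with hk
    have h1N : 1 ≤ N := le_trans hn0pos hN
    have hdivpos : N / n0 ≠ 0 := by
      have : 1 ≤ N / n0 := (Nat.le_div_iff_mul_le hn0pos).2 (by simpa using hN)
      omega
    have hlow : 2^k ≤ N / n0 := Nat.pow_log_le_self 2 hdivpos
    have hlowN : 2^k * n0 ≤ N := le_trans (Nat.mul_le_mul_right n0 hlow)
      (Nat.div_mul_le_self N n0)
    have hhighN : N ≤ 2^(k+1) * n0 := by
      have hstep2 : N / n0 + 1 ≤ 2^(k+1) := Nat.lt_pow_succ_log_self (by norm_num) (N/n0)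
      have := Nat.lt_mul_div_succ N hn0pos
      calc N ≤ n0 * (N / n0 + 1) := this.le
        _ ≤ n0 * 2^(k+1) := Nat.mul_le_mul_left n0 hstep2
        _ = 2^(k+1) * n0 := Nat.mul_comm _ _
    have hmono1 : γ (2^(k+1) * n0) ≤ γ N := hγmono N (2^(k+1)*n0) h1N hhighN
    have hd := hdyadic (k+1)
    have hpos2 : (0:ℝ) < γ (2^(k+1) * n0) :=
      hγpos _ (le_trans hn0pos (Nat.le_mul_of_pos_left n0 (Nat.pow_pos (by norm_num))))
    have hcastle : ((2^k * n0 : ℕ):ℝ) ≤ (N:ℝ) := by exact_mod_cast hlowN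
    have key : (2⁻¹ : ℝ) * u (2^(k+1) * n0) ≤ u N := by
      show 2⁻¹ * (((2^(k+1)*n0 : ℕ):ℝ) * γ (2^(k+1)*n0)) ≤ (N:ℝ) * γ N
      have e : ((2^(k+1) * n0 : ℕ):ℝ) = 2 * ((2^k * n0 : ℕ):ℝ) := by push_cast; ring
      rw [e]
      have : ((2^k*n0:ℕ):ℝ) * γ (2^(k+1)*n0) ≤ (N:ℝ) * γ N := by
        apply mul_le_mul hcastle hmono1 hpos2.le (Nat.cast_nonneg N)
      linarith
    calc (2⁻¹ * u n0) * (2*c)^(k+1) = 2⁻¹ * ((2*c)^(k+1) * u n0) := by ring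
      _ ≤ 2⁻¹ * u (2^(k+1) * n0) := by linarith [hd]
      _ ≤ u N := key
  -- conclude
  have hlogT : Tendsto (fun N : ℕ => Nat.log 2 (N / n0)) atTop atTop := by
    refine tendsto_atTop.2 fun b => ?_
    filter_upwards [eventually_ge_atTop (2^b * n0)] with N hN
    have h1 : 2^b ≤ N / n0 := (Nat.le_div_iff_mul_le hn0pos).2 hN
    have hne : N / n0 ≠ 0 := by
      have : (1:ℕ) ≤ 2^b := Nat.one_le_two_pow
      omega
    exact (Nat.le_log_iff_pow_le (by norm_num) hne).2 h1
  have hc2gt1 : (1:ℝ) < 2*c := by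
    have : (1:ℝ) = 2 * 2⁻¹ := by norm_num
    nlinarith
  have hpowT : Tendsto (fun k : ℕ => (2*c)^k) atTop atTop :=
    tendsto_pow_atTop_atTop_of_one_lt hc2gt1
  have hpos3 : (0:ℝ) < 2⁻¹ * u n0 := by positivity
  have hlogT' : Tendsto (fun N : ℕ => Nat.log 2 (N / n0) + 1) atTop atTop :=
    tendsto_atTop_mono (fun N => Nat.le_succ _) hlogT
  have hcomp' : Tendsto (fun N : ℕ => (2*c)^(Nat.log 2 (N / n0) + 1)) atTop atTop :=
    hpowT.comp hlogT'
  have hcomp : Tendsto (fun N : ℕ => (2⁻¹ * u n0) * (2*c)^(Nat.log 2 (N / n0) + 1)) atTop atTop :=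
    hcomp'.const_mul_atTop hpos3
  apply tendsto_atTop_mono' atTop _ hcomp
  filter_upwards [eventually_ge_atTop n0] with N hN
  exact hbound N hN

lemma ratio_tendsto_one (γ : ℕ → ℝ) (hγpos : ∀ i, 1 ≤ i → 0 < γ i)
    (hγmono : ∀ i j, 1 ≤ i → i ≤ j → γ j ≤ γ i)
    (ρ : ℝ) (hρ0 : 0 ≤ ρ)
    (hγRV : ∀ lam : ℝ, 0 < lam →
      Tendsto (fun i : ℕ => γ ⌊lam * (i : ℝ)⌋₊ / γ i) atTop (𝓝 (lam ^ (-ρ))))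
    (hmul : Tendsto (fun N : ℕ => (N:ℝ) * γ N) atTop atTop)
    (K : ℝ) (hK : 0 < K) :
    Tendsto (fun N : ℕ => γ (⌊(N:ℝ) - K / γ N⌋₊ + 1) / γ N) atTop (𝓝 1) := by
  rw [Metric.tendsto_atTop]
  intro ε hε
  -- choose lam ∈ (0,1) with lam^(-ρ) < 1 + ε/2
  have hcont : Tendsto (fun l : ℝ => l ^ (-ρ)) (𝓝[<] (1:ℝ)) (𝓝 1) := by
    have h1 : ContinuousAt (fun l : ℝ => l ^ (-ρ)) 1 :=
      Real.continuousAt_rpow_const 1 (-ρ) (Or.inl one_ne_zero)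
    have := h1.tendsto.mono_left (nhdsWithin_le_nhds (s := Set.Iio (1:ℝ)))
    simpa [Real.one_rpow] using this
  have hev1 : ∀ᶠ l : ℝ in 𝓝[<] (1:ℝ), l ^ (-ρ) < 1 + ε/2 :=
    hcont.eventually_lt_const (by linarith)
  have hev2 : ∀ᶠ l : ℝ in 𝓝[<] (1:ℝ), l ∈ Set.Ioo (0:ℝ) 1 :=
    Ioo_mem_nhdsLT_of_mem (by constructor <;> norm_num)
  obtain ⟨lam, hlam1, hlam2⟩ := (hev1.and hev2).exists
  obtain ⟨hlam0, hlamlt1⟩ := hlam2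
  -- eventual facts
  have hE1 : ∀ᶠ N : ℕ in atTop, γ (⌊lam * (N:ℝ)⌋₊) / γ N < 1 + ε/2 :=
    (hγRV lam hlam0).eventually_lt_const hlam1
  have hE2 : ∀ᶠ N : ℕ in atTop, K / (1 - lam) ≤ (N:ℝ) * γ N :=
    hmul.eventually_ge_atTop _
  have hE3 : ∀ᶠ N : ℕ in atTop, (1:ℝ) ≤ lam * (N:ℝ) := by
    have : Tendsto (fun N : ℕ => lam * (N:ℝ)) atTop atTop :=
      (tendsto_natCast_atTop_atTop).const_mul_atTop hlam0
    exact this.eventually_ge_atTop 1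
  rw [← eventually_atTop]
  filter_upwards [hE1, hE2, hE3, eventually_ge_atTop 1] with N h1 h2 h3 h4
  have hγN : 0 < γ N := hγpos N h4
  set x : ℝ := (N:ℝ) - K / γ N with hx
  set m : ℕ := ⌊x⌋₊ with hmdef
  have h1lam : 0 < 1 - lam := by linarith
  -- x ≥ lam * N
  have hxlam : lam * (N:ℝ) ≤ x := by
    rw [hx]
    have : K / γ N ≤ (1 - lam) * N := by
      rw [div_le_iff₀ hγN]
      have := (div_le_iff₀ h1lam).1 h2
      nlinarith
    linarith
  have hx0 : 0 ≤ x := le_trans (by positivity) hxlam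
  -- floor inequalities
  have hfl : ⌊lam * (N:ℝ)⌋₊ ≤ m + 1 := le_trans (Nat.floor_le_floor hxlam) (Nat.le_succ m)
  have hfl1 : 1 ≤ ⌊lam * (N:ℝ)⌋₊ := Nat.le_floor (by exact_mod_cast h3)
  have hm1N : m + 1 ≤ N := by
    have hxN : x < (N:ℝ) := by
      rw [hx]; have : 0 < K / γ N := div_pos hK hγN; linarith
    exact (Nat.floor_lt hx0).2 hxN
  -- ratio bounds
  have hup : γ (m+1) ≤ γ (⌊lam * (N:ℝ)⌋₊) := hγmono _ _ hfl1 hfl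
  have hlo : γ N ≤ γ (m+1) := hγmono (m+1) N (Nat.le_add_left 1 m) hm1N
  have hrlo : (1:ℝ) ≤ γ (m+1) / γ N := (one_le_div hγN).2 hlo
  have hrup : γ (m+1) / γ N < 1 + ε/2 := by
    have : γ (m+1) / γ N ≤ γ (⌊lam * (N:ℝ)⌋₊) / γ N := by
      exact (div_le_div_iff_of_pos_right hγN).2 hup
    exact lt_of_le_of_lt this h1
  rw [Real.dist_eq, abs_of_nonneg (by linarith : (0:ℝ) ≤ γ (m+1)/γ N - 1)]
  linarith


/-- For a positive non-increasing sequence `{γ_i}`, regularly varying with index `−ρ`,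
`ρ ∈ [0,1)`, one has `G(N) − G(N − K/γ_N) → K` for every `K > 0`. -/
theorem Gfun_increment_limit
    (γ : ℕ → ℝ) (hγpos : ∀ i, 1 ≤ i → 0 < γ i)
    (hγmono : ∀ i j, 1 ≤ i → i ≤ j → γ j ≤ γ i)
    (ρ : ℝ) (hρ0 : 0 ≤ ρ) (hρ1 : ρ < 1)
    (hγRV : ∀ lam : ℝ, 0 < lam →
      Tendsto (fun i : ℕ => γ ⌊lam * (i : ℝ)⌋₊ / γ i) atTop (𝓝 (lam ^ (-ρ)))) :
    ∀ K : ℝ, 0 < K →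
      Tendsto (fun N : ℕ => Gfun γ (N : ℝ) - Gfun γ ((N : ℝ) - K / γ N)) atTop (𝓝 K) := by
  intro K hK
  have hmul := mul_self_tendsto_atTop γ hγpos hγmono ρ hρ1 hγRV
  have hratio := ratio_tendsto_one γ hγpos hγmono ρ hρ0 hγRV hmul K hK
  have hupperT : Tendsto (fun N : ℕ => K * (γ (⌊(N:ℝ) - K / γ N⌋₊ + 1) / γ N)) atTop (𝓝 K) := by
    have := hratio.const_mul K
    simpa using this
  refine tendsto_of_tendsto_of_tendsto_of_le_of_le' (tendsto_const_nhds) hupperT ?_ ?_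
  · filter_upwards [hmul.eventually_ge_atTop K, eventually_ge_atTop 1] with N h2 h4
    have hγN : 0 < γ N := hγpos N h4
    set x : ℝ := (N:ℝ) - K / γ N with hx
    have hx0 : 0 ≤ x := by
      rw [hx]; rw [sub_nonneg, div_le_iff₀ hγN]; nlinarith
    have hxN : x ≤ (N:ℝ) := by
      rw [hx]; have : 0 ≤ K / γ N := le_of_lt (div_pos hK hγN); linarith
    have hb := (Gfun_diff_bounds γ hγmono N x hx0 hxN).1
    have he : ((N:ℝ) - x) * γ N = K := by
      rw [hx]; field_simp; ring
    linarith [hb, he.symm.le]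
  · filter_upwards [hmul.eventually_ge_atTop K, eventually_ge_atTop 1] with N h2 h4
    have hγN : 0 < γ N := hγpos N h4
    set x : ℝ := (N:ℝ) - K / γ N with hx
    have hx0 : 0 ≤ x := by
      rw [hx]; rw [sub_nonneg, div_le_iff₀ hγN]; nlinarith
    have hxN : x ≤ (N:ℝ) := by
      rw [hx]; have : 0 ≤ K / γ N := le_of_lt (div_pos hK hγN); linarith
    have hb := (Gfun_diff_bounds γ hγmono N x hx0 hxN).2
    have he : ((N:ℝ) - x) * γ (⌊x⌋₊ + 1) = K * (γ (⌊x⌋₊ + 1) / γ N) := by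
      rw [hx]; field_simp; ring
    calc Gfun γ (N:ℝ) - Gfun γ x ≤ ((N:ℝ) - x) * γ (⌊x⌋₊ + 1) := hb
      _ = K * (γ (⌊x⌋₊ + 1) / γ N) := he
end
end

section
/- Let {γ_i}_{i≥1} be a positive non-increasing sequence, regularly varying with index −ρ for some ρ∈[0,1), let G:[0,∞)→[0,∞) be the piecewise linear function with G(0)=0 and G(N)=Σ_{i=1}^N γ_i for integers N≥1, and let G^{−1}(u)=inf{x≥0 : G(x)≥u}. Then for every compact subset C of (0,∞), γ_N·(N − G^{−1}(G(N)−t)) → t as N→∞, uniformly in t∈C. -/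
open Filter Finset Set
open scoped Topology
noncomputable section

/-- The generalized inverse `G⁻¹(u) = inf {x ≥ 0 : G(x) ≥ u}`. -/
def Ginv (γ : ℕ → ℝ) (u : ℝ) : ℝ :=
  sInf {x : ℝ | 0 ≤ x ∧ u ≤ Gfun γ x}

lemma Gfun_eq_Ioc (γ : ℕ → ℝ) (x : ℝ) :
    Gfun γ x = (∑ i ∈ Finset.Ioc 0 ⌊x⌋₊, γ i) + (x - (⌊x⌋₊ : ℝ)) * γ (⌊x⌋₊ + 1) := by
  rw [Gfun, ← Finset.Icc_add_one_left_eq_Ioc, zero_add]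

lemma Gfun_nat (γ : ℕ → ℝ) (N : ℕ) : Gfun γ (N : ℝ) = ∑ i ∈ Finset.Ioc 0 N, γ i := by
  rw [Gfun_eq_Ioc, Nat.floor_natCast]; ring

lemma slope_bounds (γ : ℕ → ℝ)
    (hγmono : ∀ i j, 1 ≤ i → i ≤ j → γ j ≤ γ i)
    (y : ℝ) (N : ℕ) (hy0 : 0 ≤ y) (hyN : y ≤ (N : ℝ)) :
    γ N * ((N:ℝ) - y) ≤ Gfun γ (N:ℝ) - Gfun γ y ∧
    Gfun γ (N:ℝ) - Gfun γ y ≤ γ (⌊y⌋₊ + 1) * ((N:ℝ) - y) := by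
  set m := ⌊y⌋₊ with hm
  have hmy : (m : ℝ) ≤ y := Nat.floor_le hy0
  have hym : y < (m : ℝ) + 1 := Nat.lt_floor_add_one y
  have hmN : m ≤ N := by
    have := Nat.floor_le_floor (R := ℝ) hyN
    simpa [hm] using this
  rcases eq_or_lt_of_le hmN with hEq | hlt
  · have hyN' : y = (N : ℝ) := le_antisymm hyN (by
      have : ((m:ℕ):ℝ) ≤ y := hmy
      rw [hEq] at this; exact this)
    subst hyN'
    constructor <;> simp
  · have hsplit : (∑ i ∈ Finset.Ioc 0 m, γ i) + ∑ i ∈ Finset.Ioc m N, γ i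
        = ∑ i ∈ Finset.Ioc 0 N, γ i :=
      Finset.sum_Ioc_consecutive γ (Nat.zero_le m) hmN
    have hsplit2 : (∑ i ∈ Finset.Ioc m (m+1), γ i) + ∑ i ∈ Finset.Ioc (m+1) N, γ i
        = ∑ i ∈ Finset.Ioc m N, γ i :=
      Finset.sum_Ioc_consecutive γ (Nat.le_succ m) hlt
    have hsingle : ∑ i ∈ Finset.Ioc m (m+1), γ i = γ (m+1) := by simp
    have hD : Gfun γ (N:ℝ) - Gfun γ y
        = (∑ i ∈ Finset.Ioc (m+1) N, γ i) + ((m:ℝ) + 1 - y) * γ (m+1) := by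
      rw [Gfun_nat, Gfun_eq_Ioc, ← hsplit, ← hsplit2, hsingle, ← hm]
      ring
    have hcard : (Finset.Ioc (m+1) N).card = N - (m+1) := Nat.card_Ioc _ _
    have hcardR : ((Finset.Ioc (m+1) N).card : ℝ) = (N:ℝ) - (m:ℝ) - 1 := by
      rw [hcard, Nat.cast_sub hlt]; push_cast; ring
    have hlow : ((N:ℝ) - (m:ℝ) - 1) * γ N ≤ ∑ i ∈ Finset.Ioc (m+1) N, γ i := by
      have := Finset.card_nsmul_le_sum (Finset.Ioc (m+1) N) γ (γ N)
        (fun i hi => by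
          obtain ⟨h1, h2⟩ := Finset.mem_Ioc.mp hi
          exact hγmono i N (by omega) h2)
      rw [nsmul_eq_mul, hcardR] at this
      exact this
    have hhigh : ∑ i ∈ Finset.Ioc (m+1) N, γ i ≤ ((N:ℝ) - (m:ℝ) - 1) * γ (m+1) := by
      have := Finset.sum_le_card_nsmul (Finset.Ioc (m+1) N) γ (γ (m+1))
        (fun i hi => by
          obtain ⟨h1, h2⟩ := Finset.mem_Ioc.mp hi
          exact hγmono (m+1) i (by omega) (le_of_lt h1))
      rw [nsmul_eq_mul, hcardR] at this
      exact this
    have hγN_le : γ N ≤ γ (m+1) := hγmono (m+1) N (by omega) hlt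
    have hfrac : 0 ≤ (m:ℝ) + 1 - y := by linarith
    constructor
    · rw [hD]; nlinarith
    · rw [hD]; nlinarith

lemma Ngamma_tendsto (γ : ℕ → ℝ) (hγpos : ∀ i, 1 ≤ i → 0 < γ i)
    (hγmono : ∀ i j, 1 ≤ i → i ≤ j → γ j ≤ γ i)
    (ρ : ℝ) (hρ1 : ρ < 1)
    (hγRV : ∀ lam : ℝ, 0 < lam →
      Tendsto (fun i : ℕ => γ ⌊lam * (i : ℝ)⌋₊ / γ i) atTop (𝓝 (lam ^ (-ρ)))) :
    Tendsto (fun N : ℕ => (N : ℝ) * γ N) atTop atTop := by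
  set ρ' : ℝ := (1 + ρ) / 2 with hρ'def
  have hρρ' : ρ < ρ' := by rw [hρ'def]; linarith
  have hρ'1 : ρ' < 1 := by rw [hρ'def]; linarith
  set s : ℝ := (2:ℝ) ^ (-ρ') with hsdef
  have hs_pos : 0 < s := Real.rpow_pos_of_pos (by norm_num) _
  have hs_lt : s < (2:ℝ) ^ (-ρ) :=
    Real.rpow_lt_rpow_of_exponent_lt (by norm_num) (by linarith)
  have hev : ∀ᶠ N : ℕ in atTop, s < γ ⌊(2:ℝ) * (N:ℝ)⌋₊ / γ N :=
    (hγRV 2 (by norm_num)).eventually (eventually_gt_nhds hs_lt)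
  have hfloor2 : ∀ N : ℕ, ⌊(2:ℝ) * (N:ℝ)⌋₊ = 2 * N := by
    intro N
    rw [show (2:ℝ) * (N:ℝ) = ((2*N : ℕ) : ℝ) by push_cast; ring, Nat.floor_natCast]
  obtain ⟨N₀, hN₀⟩ := (hev.and (eventually_ge_atTop 1)).exists_forall_of_atTop
  set N₁ := max N₀ 1 with hN₁def
  have hN₁pos : 1 ≤ N₁ := le_max_right _ _
  have hdouble : ∀ N, N₁ ≤ N → s * γ N ≤ γ (2 * N) := by
    intro N hN
    have h := (hN₀ N (le_trans (le_max_left _ _) hN)).1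
    rw [hfloor2] at h
    have hγNpos : 0 < γ N := hγpos N (le_trans hN₁pos hN)
    have := (lt_div_iff₀ hγNpos).mp h
    linarith
  have hiter : ∀ k : ℕ, s ^ k * γ N₁ ≤ γ (2 ^ k * N₁) := by
    intro k
    induction k with
    | zero => simp
    | succ k ih =>
      have h1 : s * γ (2 ^ k * N₁) ≤ γ (2 * (2 ^ k * N₁)) :=
        hdouble _ (Nat.le_mul_of_pos_left N₁ (Nat.pow_pos (n := k) (by norm_num)))
      have h2 : s * (s ^ k * γ N₁) ≤ s * γ (2 ^ k * N₁) :=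
        mul_le_mul_of_nonneg_left ih hs_pos.le
      calc s ^ (k+1) * γ N₁ = s * (s ^ k * γ N₁) := by ring
        _ ≤ γ (2 * (2 ^ k * N₁)) := le_trans h2 h1
        _ = γ (2 ^ (k+1) * N₁) := by ring_nf
  set q : ℝ := 2 * s with hqdef
  have hq1 : 1 < q := by
    rw [hqdef, hsdef]
    have h2 : (2:ℝ) * (2:ℝ)^(-ρ') = (2:ℝ)^(1 + -ρ') := by
      rw [Real.rpow_add (by norm_num), Real.rpow_one]
    rw [h2]
    exact (Real.one_lt_rpow_iff_of_pos (by norm_num)).mpr (Or.inl ⟨by norm_num, by linarith⟩)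
  set c : ℝ := (N₁ : ℝ) * γ N₁ * s with hcdef
  have hc_pos : 0 < c := by
    apply mul_pos (mul_pos _ (hγpos N₁ hN₁pos)) hs_pos
    exact_mod_cast Nat.lt_of_lt_of_le Nat.zero_lt_one hN₁pos
  have hmain : ∀ N, N₁ ≤ N → c * q ^ (Nat.log 2 (N / N₁)) ≤ (N:ℝ) * γ N := by
    intro N hN
    set k := Nat.log 2 (N / N₁) with hk
    have hN₁0 : 0 < N₁ := hN₁pos
    have hdiv0 : N / N₁ ≠ 0 := by
      have : 1 ≤ N / N₁ := (Nat.le_div_iff_mul_le hN₁0).mpr (by omega)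
      omega
    have hlow : 2 ^ k * N₁ ≤ N :=
      (Nat.le_div_iff_mul_le hN₁0).mp (Nat.pow_log_le_self 2 hdiv0)
    have hhigh : N < 2 ^ (k+1) * N₁ := by
      have h1 : N / N₁ < 2 ^ (k+1) := by
        simpa [← hk, Nat.succ_eq_add_one] using
          Nat.lt_pow_succ_log_self (b := 2) (by norm_num) (N / N₁)
      exact (Nat.div_lt_iff_lt_mul hN₁0).mp h1
    have hγ1 : γ (2 ^ (k+1) * N₁) ≤ γ N :=
      hγmono N _ (le_trans hN₁pos hN) (le_of_lt hhigh)
    have hγ2 : s ^ (k+1) * γ N₁ ≤ γ N := le_trans (hiter (k+1)) hγ1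
    have hNlow : ((2:ℝ) ^ k * (N₁:ℝ)) ≤ (N:ℝ) := by exact_mod_cast hlow
    have hγ2pos : 0 < s ^ (k+1) * γ N₁ :=
      mul_pos (pow_pos hs_pos _) (hγpos N₁ hN₁pos)
    calc c * q ^ k = ((2:ℝ)^k * (N₁:ℝ)) * (s ^ (k+1) * γ N₁) := by
          rw [hcdef, hqdef, mul_pow]; ring
      _ ≤ (N:ℝ) * (s ^ (k+1) * γ N₁) := mul_le_mul_of_nonneg_right hNlow hγ2pos.le
      _ ≤ (N:ℝ) * γ N := mul_le_mul_of_nonneg_left hγ2 (by positivity)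
  rw [tendsto_atTop]
  intro M
  obtain ⟨k₀, hk₀⟩ := (tendsto_atTop.mp (tendsto_pow_atTop_atTop_of_one_lt hq1) (M / c)).exists
  rw [eventually_atTop]
  refine ⟨2 ^ k₀ * N₁, fun N hN => ?_⟩
  have hN' : N₁ ≤ N :=
    le_trans (Nat.le_mul_of_pos_left N₁ (Nat.pow_pos (n := k₀) (by norm_num))) hN
  have hk : k₀ ≤ Nat.log 2 (N / N₁) := by
    have h1 : 2 ^ k₀ ≤ N / N₁ := (Nat.le_div_iff_mul_le hN₁pos).mpr hN
    have hdiv0 : N / N₁ ≠ 0 := by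
      have : 1 ≤ N / N₁ := le_trans Nat.one_le_two_pow h1
      omega
    exact (Nat.le_log_iff_pow_le (by norm_num) hdiv0).mpr h1
  have hmono : q ^ k₀ ≤ q ^ (Nat.log 2 (N / N₁)) := pow_le_pow_right₀ hq1.le hk
  have h1 : M / c ≤ q ^ (Nat.log 2 (N / N₁)) := le_trans hk₀ hmono
  have h2 : M ≤ c * q ^ (Nat.log 2 (N / N₁)) := by
    rw [div_le_iff₀ hc_pos] at h1; linarith
  exact le_trans h2 (hmain N hN')

lemma final_est (t b ε η gN gK A : ℝ) (hb : 0 < b) (hε : 0 < ε)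
    (hηdef : η = ε / (4 * b)) (ht0 : 0 < t) (htb : t ≤ b)
    (hgN : 0 < gN) (hgNK : gN ≤ gK)
    (hratio : gK < (1 + 2 * η) * gN)
    (key1 : gN * A ≤ t) (key2 : t ≤ gK * A) :
    |t - gN * A| < ε := by
  have hη : 0 < η := by rw [hηdef]; positivity
  have hgK : 0 < gK := lt_of_lt_of_le hgN hgNK
  rw [abs_of_nonneg (by linarith)]
  have h12 : gN * t ≤ gK * (gN * A) := by nlinarith
  have h13 : gK * (t - gN * A) ≤ t * (gK - gN) := by nlinarith
  have hd : gK - gN < 2 * η * gK := by nlinarith [mul_le_mul_of_nonneg_left hgNK hη.le]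
  have h14 : t * (gK - gN) < t * (2 * η * gK) := by
    exact mul_lt_mul_of_pos_left hd ht0
  have h15 : t - gN * A < t * (2 * η) := by nlinarith
  have h16 : t * (2 * η) ≤ b * (2 * η) := by nlinarith
  have h17 : b * (2 * η) = ε / 2 := by rw [hηdef]; field_simp; ring
  linarith

set_option maxHeartbeats 1600000 in
/-- For a positive non-increasing sequence `{γ_i}`, regularly varying with index `−ρ`,
`ρ ∈ [0,1)`, one has `γ_N (N − G⁻¹(G(N) − t)) → t` uniformly on compact subsets of
`(0,∞)`. -/
theorem Ginv_increment_uniform_limit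
    (γ : ℕ → ℝ) (hγpos : ∀ i, 1 ≤ i → 0 < γ i)
    (hγmono : ∀ i j, 1 ≤ i → i ≤ j → γ j ≤ γ i)
    (ρ : ℝ) (hρ0 : 0 ≤ ρ) (hρ1 : ρ < 1)
    (hγRV : ∀ lam : ℝ, 0 < lam →
      Tendsto (fun i : ℕ => γ ⌊lam * (i : ℝ)⌋₊ / γ i) atTop (𝓝 (lam ^ (-ρ)))) :
    ∀ C : Set ℝ, IsCompact C → C ⊆ Set.Ioi (0:ℝ) →
      TendstoUniformlyOn
        (fun (N : ℕ) (t : ℝ) => γ N * ((N : ℝ) - Ginv γ (Gfun γ (N : ℝ) - t)))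
        (fun t => t) atTop C := by
  intro C hC hCpos
  rcases C.eq_empty_or_nonempty with rfl | hCne
  · exact tendstoUniformlyOn_empty
  obtain ⟨a, hadef⟩ : ∃ z : ℝ, z = sInf C := ⟨_, rfl⟩
  have haC : a ∈ C := hadef ▸ hC.sInf_mem hCne
  have ha : 0 < a := hCpos haC
  obtain ⟨b, hbdef⟩ : ∃ z : ℝ, z = sSup C := ⟨_, rfl⟩
  have hab : ∀ t ∈ C, a ≤ t ∧ t ≤ b :=
    fun t ht => ⟨hadef ▸ csInf_le hC.bddBelow ht, hbdef ▸ le_csSup hC.bddAbove ht⟩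
  have hb : 0 < b := lt_of_lt_of_le ha (hab a haC).2
  rw [Metric.tendstoUniformlyOn_iff]
  intro ε hε
  obtain ⟨η, hηdef⟩ : ∃ z : ℝ, z = ε / (4 * b) := ⟨_, rfl⟩
  have hη : 0 < η := by rw [hηdef]; positivity
  obtain ⟨lam, hlamdef⟩ : ∃ z : ℝ, z = (1 + η)⁻¹ := ⟨_, rfl⟩
  have hlam0 : 0 < lam := by rw [hlamdef]; positivity
  have hlam1 : lam < 1 := by
    rw [hlamdef, inv_lt_one_iff₀]; right; linarith
  have hrpow : lam ^ (-ρ) ≤ 1 + η := by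
    rw [hlamdef, Real.inv_rpow (by positivity), ← Real.rpow_neg (by positivity), neg_neg]
    calc (1 + η) ^ ρ ≤ (1 + η) ^ (1:ℝ) :=
          Real.rpow_le_rpow_of_exponent_le (by linarith) (by linarith)
      _ = 1 + η := Real.rpow_one _
  obtain ⟨θ, hθdef⟩ : ∃ z : ℝ, z = 1 - lam := ⟨_, rfl⟩
  have hθ0 : 0 < θ := by rw [hθdef]; linarith
  have hθ1 : θ ≤ 1 := by rw [hθdef]; linarith
  have Hev1 : ∀ᶠ N : ℕ in atTop, γ ⌊lam * (N:ℝ)⌋₊ / γ N < lam ^ (-ρ) + η :=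
    (hγRV lam hlam0).eventually (eventually_lt_nhds (lt_add_of_pos_right _ hη))
  have Hev2 : ∀ᶠ N : ℕ in atTop, 2 * b / θ ≤ (N:ℝ) * γ N :=
    (Ngamma_tendsto γ hγpos hγmono ρ hρ1 hγRV).eventually_ge_atTop _
  have Hev3 : ∀ᶠ N : ℕ in atTop, 2 / θ ≤ (N:ℝ) :=
    tendsto_natCast_atTop_atTop.eventually_ge_atTop _
  have Hev4 : ∀ᶠ N : ℕ in atTop, 1 / lam ≤ (N:ℝ) :=
    tendsto_natCast_atTop_atTop.eventually_ge_atTop _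
  filter_upwards [Hev1, Hev2, Hev3, Hev4, eventually_ge_atTop 1] with N h1 h2 h3 h4 hN1
  intro t ht
  obtain ⟨hta, htb⟩ := hab t ht
  have ht0 : 0 < t := lt_of_lt_of_le ha hta
  have hγN : 0 < γ N := hγpos N hN1
  obtain ⟨u, hudef⟩ : ∃ z : ℝ, z = Gfun γ (N:ℝ) - t := ⟨_, rfl⟩
  obtain ⟨S, hSdef⟩ : ∃ z : Set ℝ, z = {x : ℝ | 0 ≤ x ∧ u ≤ Gfun γ x} := ⟨_, rfl⟩
  have hmemS : ∀ y : ℝ, y ∈ S ↔ 0 ≤ y ∧ u ≤ Gfun γ y := fun y => by rw [hSdef]; rfl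
  have hNS : (N:ℝ) ∈ S := (hmemS _).mpr ⟨Nat.cast_nonneg N, by rw [hudef]; linarith⟩
  have hbdd : BddBelow S := ⟨0, fun z hz => ((hmemS z).mp hz).1⟩
  obtain ⟨x, hxdef⟩ : ∃ z : ℝ, z = sInf S := ⟨_, rfl⟩
  have hGinv : Ginv γ u = x := by rw [hxdef, hSdef]; rfl
  have hx0 : 0 ≤ x := hxdef ▸ le_csInf ⟨(N:ℝ), hNS⟩ (fun y hy => ((hmemS y).mp hy).1)
  have hxN : x ≤ (N:ℝ) := hxdef ▸ csInf_le hbdd hNS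
  -- Step 1 : x ≥ N - t/γN
  have hxlow : (N:ℝ) - t / γ N ≤ x := by
    rw [hxdef]
    apply le_csInf ⟨(N:ℝ), hNS⟩
    intro y hy
    obtain ⟨hy0, hGy⟩ := (hmemS y).mp hy
    by_cases hyN : y ≤ (N:ℝ)
    · have hs := (slope_bounds γ hγmono y N hy0 hyN).1
      have h5 : γ N * ((N:ℝ) - y) ≤ t := by rw [hudef] at hGy; linarith
      have h6 : (N:ℝ) - y ≤ t / γ N := (le_div_iff₀ hγN).mpr (by linarith)
      linarith
    · push_neg at hyN
      have : 0 < t / γ N := by positivity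
      linarith
  have key1 : γ N * ((N:ℝ) - x) ≤ t := by
    have h5 : (N:ℝ) - x ≤ t / γ N := by linarith
    calc γ N * ((N:ℝ) - x) ≤ γ N * (t / γ N) :=
          mul_le_mul_of_nonneg_left h5 hγN.le
      _ = t := by field_simp
  -- lower bound on x
  have hbγ : b / γ N ≤ θ * (N:ℝ) / 2 := by
    rw [div_le_iff₀ hγN]
    have h5 := mul_le_mul_of_nonneg_left h2 hθ0.le
    calc b = θ * (2 * b / θ) / 2 := by field_simp
      _ ≤ θ * ((N:ℝ) * γ N) / 2 := by linarith
      _ = θ * (N:ℝ) / 2 * γ N := by ring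
  have hxlow2 : (N:ℝ) - θ * (N:ℝ) / 2 ≤ x := by
    have h5 : t / γ N ≤ b / γ N := by gcongr
    linarith
  have hθN2 : 1 ≤ θ * (N:ℝ) / 2 := by
    rw [div_le_iff₀ hθ0] at h3
    linarith [mul_comm (N:ℝ) θ]
  have hx1 : 1 ≤ x := by
    have hθN : θ * (N:ℝ) ≤ 1 * (N:ℝ) := mul_le_mul_of_nonneg_right hθ1 (Nat.cast_nonneg N)
    linarith
  -- the comparison index K
  obtain ⟨K, hKdef⟩ : ∃ z : ℕ, z = ⌊lam * (N:ℝ)⌋₊ := ⟨_, rfl⟩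
  rw [← hKdef] at h1
  have hlamN1 : 1 ≤ lam * (N:ℝ) := by
    rw [div_le_iff₀ hlam0] at h4
    linarith [mul_comm (N:ℝ) lam]
  have hK1 : 1 ≤ K := by rw [hKdef]; exact Nat.le_floor (by exact_mod_cast hlamN1)
  have hKN : K ≤ N := by
    have h5 : lam * (N:ℝ) ≤ (N:ℝ) := by
      have := mul_le_mul_of_nonneg_right hlam1.le (Nat.cast_nonneg (α := ℝ) N)
      linarith
    rw [hKdef]
    calc ⌊lam * (N:ℝ)⌋₊ ≤ ⌊(N:ℝ)⌋₊ := Nat.floor_le_floor h5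
      _ = N := Nat.floor_natCast N
  have hγK : 0 < γ K := hγpos K hK1
  have hγNK : γ N ≤ γ K := hγmono K N hK1 hKN
  have hratio : γ K < (1 + 2*η) * γ N := by
    have h6 : γ K / γ N < 1 + 2*η := by linarith
    rw [div_lt_iff₀ hγN] at h6
    linarith
  -- Step 2 : t ≤ γ K * (N - x)
  have key2 : t ≤ γ K * ((N:ℝ) - x) := by
    by_contra hcon
    push_neg at hcon
    obtain ⟨δ, hδdef⟩ : ∃ z : ℝ, z = min 1 ((t - γ K * ((N:ℝ) - x)) / (2 * γ K)) := ⟨_, rfl⟩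
    have hδpos : 0 < δ := by
      rw [hδdef]
      exact lt_min one_pos (div_pos (by linarith) (by positivity))
    have hδ1 : δ ≤ 1 := hδdef ▸ min_le_left _ _
    have hδ2 : δ ≤ (t - γ K * ((N:ℝ) - x)) / (2 * γ K) := hδdef ▸ min_le_right _ _
    obtain ⟨y, hydef⟩ : ∃ z : ℝ, z = x - δ := ⟨_, rfl⟩
    have hy0 : 0 ≤ y := by rw [hydef]; linarith
    have hyx : y < x := by rw [hydef]; linarith
    have hynotS : y ∉ S := fun h => absurd (hxdef ▸ csInf_le hbdd h) (by linarith)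
    have hGy : Gfun γ y < u := by
      by_contra hG
      push_neg at hG
      exact hynotS ((hmemS y).mpr ⟨hy0, hG⟩)
    have hyN : y ≤ (N:ℝ) := by linarith
    have hs := (slope_bounds γ hγmono y N hy0 hyN).2
    have ht_lt : t < γ (⌊y⌋₊ + 1) * ((N:ℝ) - y) := by
      rw [hudef] at hGy; linarith
    have hyK : (K:ℝ) ≤ y := by
      have h5 : (K:ℝ) ≤ lam * (N:ℝ) := by rw [hKdef]; exact Nat.floor_le (by positivity)
      have h6 : lam * (N:ℝ) = (N:ℝ) - θ * (N:ℝ) := by rw [hθdef]; ring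
      rw [hydef]
      linarith
    have hKfloor : K ≤ ⌊y⌋₊ := Nat.le_floor (by exact_mod_cast hyK)
    have hγy : γ (⌊y⌋₊ + 1) ≤ γ K := hγmono K (⌊y⌋₊ + 1) hK1 (by omega)
    have h8 : t < γ K * ((N:ℝ) - y) := by
      have h9 : γ (⌊y⌋₊ + 1) * ((N:ℝ) - y) ≤ γ K * ((N:ℝ) - y) :=
        mul_le_mul_of_nonneg_right hγy (by linarith)
      linarith
    have h10 : γ K * ((N:ℝ) - y) = γ K * ((N:ℝ) - x) + γ K * δ := by
      rw [hydef]; ring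
    have h11 : γ K * δ ≤ (t - γ K * ((N:ℝ) - x)) / 2 := by
      rw [le_div_iff₀ (by positivity : (0:ℝ) < 2 * γ K)] at hδ2
      linarith [show δ * (2 * γ K) = 2 * (γ K * δ) from by ring]
    linarith
  -- conclusion
  show dist t (γ N * ((N:ℝ) - Ginv γ (Gfun γ (N:ℝ) - t))) < ε
  rw [← hudef, hGinv, Real.dist_eq]
  exact final_est t b ε η (γ N) (γ K) ((N:ℝ) - x) hb hε hηdef ht0 htb hγN hγNK hratio key1 key2
end
end
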